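/- arXiv:2106.12201 — 6 statements merged into one kernel-verified Lean document; each statement's English description precedes it below -/
import Mathlib

section
/- For every α ∈ (0,1) and every η ≥ 0, ∫_1^∞ (1 - e^{-ηx}) · (α/Γ(1-α)) (x-1)^{-α} x^{-1} dx = α γ(α;η), where γ(α;η) = ∫_0^η e^{-w} w^{α-1} dw. Hence α γ(α;·) is the Laplace exponent of a subordinator with zero drift, zero killing and Lévy density (α/Γ(1-α))(x-1)^{-α} x^{-1} 1_{x≥1}. -/
open Real Set MeasureTheory

lemma aux_inner_integrable {α : ℝ} (hα0 : 0 < α) (hα1 : α < 1) {w : ℝ} (hw : 0 < w) :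
    IntegrableOn (fun x : ℝ => Real.exp (-w * x) * (x - 1) ^ (-α)) (Ioi 1) := by
  have hemb : MeasurableEmbedding (fun t : ℝ => t + 1) :=
    (MeasurableEquiv.addRight (1 : ℝ)).measurableEmbedding
  have hpres : MeasurePreserving (fun t : ℝ => t + 1) volume volume :=
    measurePreserving_add_right volume 1
  have hpre : (fun t : ℝ => t + 1) ⁻¹' (Ioi 1) = Ioi 0 := by
    ext t; simp
  rw [← hpres.integrableOn_comp_preimage hemb, hpre]
  have h1 : IntegrableOn
      (fun t : ℝ => Real.exp (-w) * (t ^ (-α) * Real.exp (-w * t))) (Ioi 0) := by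
    apply Integrable.const_mul
    have := integrableOn_rpow_mul_exp_neg_mul_rpow (s := -α) (p := 1) (b := w)
      (by linarith) one_pos hw
    simpa [Real.rpow_one, IntegrableOn] using this
  refine h1.congr_fun (fun t ht => ?_) measurableSet_Ioi
  simp only [Function.comp, add_sub_cancel_right]
  rw [show -w * (t + 1) = -w + -w * t by ring, Real.exp_add]
  ring

lemma aux_inner_value {α : ℝ} (hα0 : 0 < α) (hα1 : α < 1) {w : ℝ} (hw : 0 < w) :
    ∫ x in Ioi (1:ℝ), Real.exp (-w * x) * (x - 1) ^ (-α)
      = Real.Gamma (1 - α) * (Real.exp (-w) * w ^ (α - 1)) := by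
  have hemb : MeasurableEmbedding (fun t : ℝ => t + 1) :=
    (MeasurableEquiv.addRight (1 : ℝ)).measurableEmbedding
  have hpres : MeasurePreserving (fun t : ℝ => t + 1) volume volume :=
    measurePreserving_add_right volume 1
  have hpre : (fun t : ℝ => t + 1) ⁻¹' (Ioi 1) = Ioi 0 := by
    ext t; simp
  have key := hpres.setIntegral_preimage_emb hemb
    (fun x : ℝ => Real.exp (-w * x) * (x - 1) ^ (-α)) (Ioi 1)
  rw [← key, hpre]
  have hcong : ∀ t ∈ Ioi (0:ℝ),
      Real.exp (-w * (t + 1)) * (t + 1 - 1) ^ (-α)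
        = Real.exp (-w) * (t ^ ((1 - α) - 1) * Real.exp (-(w * t))) := by
    intro t ht
    rw [add_sub_cancel_right, show (1 - α) - 1 = -α by ring,
      show -w * (t + 1) = -w + -(w * t) by ring, Real.exp_add]
    ring
  rw [setIntegral_congr_fun measurableSet_Ioi hcong, integral_const_mul,
    integral_rpow_mul_exp_neg_mul_Ioi (by linarith) hw,
    one_div, Real.inv_rpow hw.le, ← Real.rpow_neg hw.le, neg_sub]
  ring

lemma aux_marg_integrable {α : ℝ} (hα0 : 0 < α) (hα1 : α < 1) {η : ℝ} (hη : 0 ≤ η) :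
    IntegrableOn (fun w : ℝ => Real.exp (-w) * w ^ (α - 1)) (Ioc 0 η) := by
  have h1 : IntegrableOn (fun w : ℝ => w ^ (α - 1)) (Ioc 0 η) := by
    have := intervalIntegral.intervalIntegrable_rpow' (a := 0) (b := η) (r := α - 1)
      (by linarith)
    rwa [intervalIntegrable_iff_integrableOn_Ioc_of_le hη] at this
  refine h1.mono' ?_ ?_
  · refine ContinuousOn.aestronglyMeasurable ?_ measurableSet_Ioc
    exact ((Real.continuous_exp.comp continuous_neg).continuousOn).mul
      (continuousOn_id.rpow_const fun x hx => Or.inl hx.1.ne')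
  · rw [ae_restrict_iff' measurableSet_Ioc]
    refine ae_of_all _ fun w hw => ?_
    have hw0 : 0 < w := hw.1
    have h2 : (0:ℝ) ≤ w ^ (α - 1) := Real.rpow_nonneg hw0.le _
    rw [Real.norm_eq_abs, abs_of_nonneg (by positivity)]
    calc Real.exp (-w) * w ^ (α - 1) ≤ 1 * w ^ (α - 1) := by
          apply mul_le_mul_of_nonneg_right _ h2
          rw [Real.exp_le_one_iff]; linarith
      _ = w ^ (α - 1) := one_mul _


/-- For `α ∈ (0,1)` and `η ≥ 0`, the Lévy–Khintchine integral of the measure with density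
`(α/Γ(1-α)) (x-1)^(-α) x⁻¹` on `(1,∞)` equals `α γ(α;η)`, where `γ` is the
lower-incomplete gamma function. -/
theorem laplace_exponent_eq_incomplete_gamma (α : ℝ) (hα : α ∈ Set.Ioo (0:ℝ) 1)
    (η : ℝ) (hη : 0 ≤ η) :
    ∫ x in Set.Ioi (1:ℝ),
        (1 - Real.exp (-η * x)) * (α / Real.Gamma (1 - α)) * (x - 1) ^ (-α) * x⁻¹
      = α * ∫ w in (0:ℝ)..η, Real.exp (-w) * w ^ (α - 1) := by
  obtain ⟨hα0, hα1⟩ := hα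
  have hΓ : 0 < Real.Gamma (1 - α) := Real.Gamma_pos_of_pos (by linarith)
  set c : ℝ := α / Real.Gamma (1 - α) with hc
  have hcΓ : c * Real.Gamma (1 - α) = α := div_mul_cancel₀ _ hΓ.ne'
  have hcpos : 0 ≤ c := by positivity
  set H : ℝ → ℝ → ℝ := fun w x => Real.exp (-w * x) * (c * (x - 1) ^ (-α)) with hH
  -- inner integral value, rearranged
  have hval : ∀ w ∈ Ioc (0:ℝ) η,
      ∫ x in Ioi (1:ℝ), H w x = α * (Real.exp (-w) * w ^ (α - 1)) := by
    intro w hw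
    have : ∀ x : ℝ, H w x = c * (Real.exp (-w * x) * (x - 1) ^ (-α)) := fun x => by
      simp only [hH]; ring
    simp only [this]
    rw [integral_const_mul, aux_inner_value hα0 hα1 hw.1, ← mul_assoc, hcΓ]
  -- step 1: rewrite integrand as an inner integral in w
  have step1 : ∀ x ∈ Ioi (1:ℝ),
      (1 - Real.exp (-η * x)) * c * (x - 1) ^ (-α) * x⁻¹
        = ∫ w in Ioc (0:ℝ) η, H w x := by
    intro x hx
    have hx0 : (0:ℝ) < x := lt_trans one_pos hx
    have hexp : ∫ w in Ioc (0:ℝ) η, Real.exp (-w * x)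
        = (1 - Real.exp (-η * x)) / x := by
      rw [← intervalIntegral.integral_of_le hη]
      have h1 : ∀ w : ℝ, Real.exp (-w * x) = Real.exp ((-x) * w) := fun w => by ring_nf
      simp only [h1]
      rw [intervalIntegral.integral_comp_mul_left (fun u => Real.exp u)
        (by simpa using hx0.ne' : (-x) ≠ 0)]
      rw [mul_zero, integral_exp, smul_eq_mul, Real.exp_zero]
      have hxne : x ≠ 0 := hx0.ne'
      field_simp
      ring_nf
    calc (1 - Real.exp (-η * x)) * c * (x - 1) ^ (-α) * x⁻¹
        = ((1 - Real.exp (-η * x)) / x) * (c * (x - 1) ^ (-α)) := by ring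
      _ = (∫ w in Ioc (0:ℝ) η, Real.exp (-w * x)) * (c * (x - 1) ^ (-α)) := by
          rw [hexp]
      _ = ∫ w in Ioc (0:ℝ) η, H w x := by rw [← integral_mul_const]
  -- integrability of H on the product
  have hsm : AEStronglyMeasurable (Function.uncurry H)
      ((volume.restrict (Ioc (0:ℝ) η)).prod (volume.restrict (Ioi (1:ℝ)))) := by
    rw [Measure.prod_restrict]
    refine ContinuousOn.aestronglyMeasurable ?_
      (measurableSet_Ioc.prod measurableSet_Ioi)
    apply ContinuousOn.mul
    · exact (Real.continuous_exp.comp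
        ((continuous_fst.neg).mul continuous_snd)).continuousOn
    · refine continuousOn_const.mul ?_
      refine ContinuousOn.rpow_const ((continuous_snd.sub continuous_const).continuousOn)
        fun p hp => Or.inl ?_
      have : (1:ℝ) < p.2 := hp.2
      simp only [ne_eq, sub_eq_zero]
      exact fun h => absurd h.symm this.ne
  have hHnonneg : ∀ w, ∀ x ∈ Ioi (1:ℝ), 0 ≤ H w x := by
    intro w x hx
    have : (0:ℝ) ≤ (x - 1) ^ (-α) := Real.rpow_nonneg (by simp at hx; linarith) _
    positivity
  have hint : Integrable (Function.uncurry H)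
      ((volume.restrict (Ioc (0:ℝ) η)).prod (volume.restrict (Ioi (1:ℝ)))) := by
    rw [integrable_prod_iff hsm]
    constructor
    · filter_upwards [ae_restrict_mem measurableSet_Ioc] with w hw
      have h2 : ∀ x : ℝ, c * (Real.exp (-w * x) * (x - 1) ^ (-α)) = H w x := fun x => by
        simp only [hH]; ring
      exact ((aux_inner_integrable hα0 hα1 hw.1).const_mul c).congr
        (ae_of_all _ h2)
    · have heq : ∀ w ∈ Ioc (0:ℝ) η,
          (∫ x in Ioi (1:ℝ), ‖H w x‖) = α * (Real.exp (-w) * w ^ (α - 1)) := by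
        intro w hw
        rw [setIntegral_congr_fun measurableSet_Ioi
          (fun x hx => by rw [Real.norm_eq_abs, abs_of_nonneg (hHnonneg w x hx)]),
          hval w hw]
      refine (((aux_marg_integrable hα0 hα1 hη).const_mul α).congr ?_ : _)
      filter_upwards [ae_restrict_mem measurableSet_Ioc] with w hw
      exact (heq w hw).symm
  -- Fubini
  calc ∫ x in Set.Ioi (1:ℝ),
        (1 - Real.exp (-η * x)) * c * (x - 1) ^ (-α) * x⁻¹
      = ∫ x in Ioi (1:ℝ), ∫ w in Ioc (0:ℝ) η, H w x := by
        exact setIntegral_congr_fun measurableSet_Ioi step1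
    _ = ∫ w in Ioc (0:ℝ) η, ∫ x in Ioi (1:ℝ), H w x := by
        exact (MeasureTheory.integral_integral_swap hint).symm
    _ = ∫ w in Ioc (0:ℝ) η, α * (Real.exp (-w) * w ^ (α - 1)) := by
        exact setIntegral_congr_fun measurableSet_Ioc hval
    _ = α * ∫ w in (0:ℝ)..η, Real.exp (-w) * w ^ (α - 1) := by
        rw [intervalIntegral.integral_of_le hη, integral_const_mul]
end

section
/- For every α ∈ (0,1) and every x > 0, (α/Γ(1-α)) ∫_0^x e^{-(x-s)} (x-s)^{α-1} Γ(-α;s) ds = Γ(α) - γ(α;x), where Γ(-α;s) = ∫_s^∞ e^{-w} w^{-α-1} dw. In other words, u(x) = γ(α;x) solves the tempered relaxation equation (α/Γ(1-α)) ∫_0^x u'(x-s) Γ(-α,s) ds = Γ(α) - u(x) with u(0) = 0, using u'(y) = e^{-y} y^{α-1}. -/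
open Real Set MeasureTheory

section TemperedAux

variable {α x : ℝ}

/-- Translation of the upper incomplete gamma integral. -/
lemma upper_gamma_shift (α s : ℝ) :
    ∫ w in Set.Ioi s, Real.exp (-w) * w ^ (-α - 1)
      = Real.exp (-s) * ∫ v in Set.Ioi (0:ℝ), Real.exp (-v) * (s + v) ^ (-α - 1) := by
  have h0 : ∫ w in Set.Ioi s, Real.exp (-w) * w ^ (-α - 1)
      = ∫ v in Set.Ioi (0:ℝ), Real.exp (-(v + s)) * (v + s) ^ (-α - 1) := by
    have hmp : MeasurePreserving (fun v : ℝ => v + s) volume volume :=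
      measurePreserving_add_right volume s
    have hemb : MeasurableEmbedding (fun v : ℝ => v + s) :=
      (Homeomorph.addRight s).isClosedEmbedding.measurableEmbedding
    have hpre : (fun v : ℝ => v + s) ⁻¹' (Set.Ioi s) = Set.Ioi (0:ℝ) := by
      ext v; simp [Set.mem_Ioi]
    rw [← hmp.setIntegral_preimage_emb hemb (fun w => Real.exp (-w) * w ^ (-α - 1)) (Set.Ioi s),
      hpre]
  rw [h0, ← integral_const_mul]
  refine setIntegral_congr_fun measurableSet_Ioi fun v _ => ?_
  rw [show -(v + s) = -s + -v by ring, Real.exp_add, show v + s = s + v by ring]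
  ring

lemma inner_ftc (hα : α ∈ Set.Ioo (0:ℝ) 1) (hx : 0 < x) {v : ℝ} (hv : 0 < v) :
    ∫ s in Set.Ioc (0:ℝ) x, (x - s) ^ (α - 1) * (s + v) ^ (-α - 1)
      = x ^ α * v ^ (-α) / (α * (x + v)) := by
  obtain ⟨hα0, hα1⟩ := hα
  have hxv : 0 < x + v := by linarith
  set F : ℝ → ℝ := fun s => -(α * (x + v))⁻¹ * ((x - s) ^ α * (s + v) ^ (-α)) with hF
  have hcont : ContinuousOn F (Set.Icc 0 x) := by
    apply ContinuousOn.mul continuousOn_const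
    apply ContinuousOn.mul
    · exact ((Real.continuous_rpow_const hα0.le).comp
        (continuous_const.sub continuous_id)).continuousOn
    · intro s hs
      have hsv : s + v ≠ 0 := ne_of_gt (by linarith [hs.1])
      exact (((continuous_id.add continuous_const).continuousAt.rpow_const
        (Or.inl hsv)).continuousWithinAt)
  have hderiv : ∀ s ∈ Set.Ioo 0 x,
      HasDerivWithinAt F ((x - s) ^ (α - 1) * (s + v) ^ (-α - 1)) (Set.Ioi s) s := by
    intro s hs
    have hxs' : 0 < x - s := by linarith [hs.2]
    have hxs : x - s ≠ 0 := hxs'.ne'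
    have hsv : 0 < s + v := by have := hs.1; linarith
    have h1 : HasDerivAt (fun s : ℝ => (x - s) ^ α)
        (α * (x - s) ^ (α - 1) * (-1)) s := by
      exact (Real.hasDerivAt_rpow_const (Or.inl hxs)).comp s
        (((hasDerivAt_id s).const_sub x))
    have h2 : HasDerivAt (fun s : ℝ => (s + v) ^ (-α))
        (-α * (s + v) ^ (-α - 1) * 1) s := by
      exact (Real.hasDerivAt_rpow_const (p := -α) (Or.inl hsv.ne')).comp s
        ((hasDerivAt_id s).add_const v)
    have h3 := ((h1.mul h2).const_mul (-(α * (x + v))⁻¹))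
    have heq : -(α * (x + v))⁻¹ *
        (α * (x - s) ^ (α - 1) * (-1) * (s + v) ^ (-α) +
          (x - s) ^ α * (-α * (s + v) ^ (-α - 1) * 1))
        = (x - s) ^ (α - 1) * (s + v) ^ (-α - 1) := by
      have e1 : (x - s) ^ α = (x - s) ^ (α - 1) * (x - s) := by
        rw [← Real.rpow_add_one hxs]; ring_nf
      have e2 : (s + v) ^ (-α) = (s + v) ^ (-α - 1) * (s + v) := by
        rw [← Real.rpow_add_one hsv.ne']; ring_nf
      rw [e1, e2]
      have hne : α * (x + v) ≠ 0 := by positivity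
      field_simp
      ring
    rw [← heq]
    exact h3.hasDerivWithinAt
  have hint : IntervalIntegrable (fun s : ℝ => (x - s) ^ (α - 1) * (s + v) ^ (-α - 1))
      volume 0 x := by
    rw [intervalIntegrable_iff_integrableOn_Ioc_of_le hx.le]
    have hb : IntegrableOn (fun s : ℝ => (x - s) ^ (α - 1) * v ^ (-α - 1)) (Set.Ioc 0 x) := by
      have h1 : IntervalIntegrable (fun t : ℝ => t ^ (α - 1)) volume 0 x :=
        intervalIntegral.intervalIntegrable_rpow' (by linarith)
      have h2 := (h1.comp_sub_left x)
      simp only [sub_zero, sub_self] at h2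
      have h3 := h2.symm.mul_const (v ^ (-α - 1))
      rwa [intervalIntegrable_iff_integrableOn_Ioc_of_le hx.le] at h3
    refine hb.mono' ((by fun_prop : Measurable fun s : ℝ =>
      (x - s) ^ (α - 1) * (s + v) ^ (-α - 1)).aestronglyMeasurable) ?_
    filter_upwards [ae_restrict_mem measurableSet_Ioc] with s hs
    have hxs : 0 ≤ x - s := by linarith [hs.2]
    have hsv : (s + v) ^ (-α - 1) ≤ v ^ (-α - 1) :=
      Real.rpow_le_rpow_of_nonpos hv (by linarith [hs.1]) (by linarith)
    rw [Real.norm_eq_abs, abs_of_nonneg (mul_nonneg (Real.rpow_nonneg hxs _)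
      (Real.rpow_nonneg (by linarith [hs.1]) _))]
    exact mul_le_mul_of_nonneg_left hsv (Real.rpow_nonneg hxs _)
  have key := intervalIntegral.integral_eq_sub_of_hasDeriv_right_of_le hx.le hcont hderiv hint
  rw [intervalIntegral.integral_of_le hx.le] at key
  rw [key, hF]
  simp only [sub_self, Real.zero_rpow hα0.ne', zero_mul, mul_zero, zero_add, zero_sub, neg_mul,
    neg_neg]
  rw [div_eq_mul_inv]
  ring

/-- Beta-type integrability. -/
lemma beta_integrable (hα : α ∈ Set.Ioo (0:ℝ) 1) (hx : 0 < x) :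
    IntegrableOn (fun s : ℝ => (x - s) ^ (α - 1) * s ^ (-α)) (Set.Ioc 0 x) := by
  obtain ⟨hα0, hα1⟩ := hα
  have hx2 : (0:ℝ) < x / 2 := by linarith
  have hsplit : Set.Ioc (0:ℝ) (x/2) ∪ Set.Ioc (x/2) x = Set.Ioc 0 x :=
    Set.Ioc_union_Ioc_eq_Ioc (by linarith) (by linarith)
  rw [← hsplit]
  apply IntegrableOn.union
  · -- on (0, x/2]: bound by (x/2)^(α-1) * s^(-α)
    have hb : IntegrableOn (fun s : ℝ => (x/2) ^ (α - 1) * s ^ (-α)) (Set.Ioc 0 (x/2)) := by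
      have h1 : IntervalIntegrable (fun t : ℝ => t ^ (-α)) volume 0 (x/2) :=
        intervalIntegral.intervalIntegrable_rpow' (by linarith)
      rw [intervalIntegrable_iff_integrableOn_Ioc_of_le hx2.le] at h1
      exact h1.const_mul _
    refine hb.mono' ((by fun_prop : Measurable fun s : ℝ =>
      (x - s) ^ (α - 1) * s ^ (-α)).aestronglyMeasurable) ?_
    filter_upwards [ae_restrict_mem measurableSet_Ioc] with s hs
    have h1 : (x - s) ^ (α - 1) ≤ (x/2) ^ (α - 1) :=
      Real.rpow_le_rpow_of_nonpos hx2 (by linarith [hs.2]) (by linarith)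
    have hxs : (0:ℝ) ≤ x - s := by linarith [hs.2, hs.1]
    rw [Real.norm_eq_abs, abs_of_nonneg (mul_nonneg (Real.rpow_nonneg hxs _)
      (Real.rpow_nonneg (le_of_lt hs.1) _))]
    exact mul_le_mul_of_nonneg_right h1 (Real.rpow_nonneg (le_of_lt hs.1) _)
  · -- on (x/2, x]: bound by (x-s)^(α-1) * (x/2)^(-α)
    have hb : IntegrableOn (fun s : ℝ => (x - s) ^ (α - 1) * (x/2) ^ (-α)) (Set.Ioc (x/2) x) := by
      have h1 : IntervalIntegrable (fun t : ℝ => t ^ (α - 1)) volume 0 x :=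
        intervalIntegral.intervalIntegrable_rpow' (by linarith)
      have h2 := (h1.comp_sub_left x)
      simp only [sub_zero, sub_self] at h2
      have h3 : IntervalIntegrable (fun s : ℝ => (x - s) ^ (α - 1)) volume (x/2) x := by
        apply h2.symm.mono_set
        rw [Set.uIcc_of_le hx.le, Set.uIcc_of_le (by linarith : x/2 ≤ x)]
        exact Set.Icc_subset_Icc (by linarith) le_rfl
      have h4 := h3.mul_const ((x/2) ^ (-α))
      rwa [intervalIntegrable_iff_integrableOn_Ioc_of_le (by linarith : x/2 ≤ x)] at h4
    refine hb.mono' ((by fun_prop : Measurable fun s : ℝ =>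
      (x - s) ^ (α - 1) * s ^ (-α)).aestronglyMeasurable) ?_
    filter_upwards [ae_restrict_mem measurableSet_Ioc] with s hs
    have hs0 : (0:ℝ) ≤ s := le_of_lt (lt_trans hx2 hs.1)
    have h1 : s ^ (-α) ≤ (x/2) ^ (-α) :=
      Real.rpow_le_rpow_of_nonpos hx2 (le_of_lt hs.1) (by linarith)
    have hxs : 0 ≤ x - s := by linarith [hs.2]
    rw [Real.norm_eq_abs, abs_of_nonneg (mul_nonneg (Real.rpow_nonneg hxs _)
      (Real.rpow_nonneg hs0 _))]
    exact mul_le_mul_of_nonneg_left h1 (Real.rpow_nonneg hxs _)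


/-- General shift of an integral over `Ioi`. -/
lemma integral_Ioi_shift' (f : ℝ → ℝ) (s : ℝ) :
    ∫ w in Set.Ioi s, f w = ∫ v in Set.Ioi (0:ℝ), f (v + s) := by
  have hmp : MeasurePreserving (fun v : ℝ => v + s) volume volume :=
    measurePreserving_add_right volume s
  have hemb : MeasurableEmbedding (fun v : ℝ => v + s) :=
    (Homeomorph.addRight s).isClosedEmbedding.measurableEmbedding
  have hpre : (fun v : ℝ => v + s) ⁻¹' (Set.Ioi s) = Set.Ioi (0:ℝ) := by
    ext v; simp [Set.mem_Ioi]
  rw [← hmp.setIntegral_preimage_emb hemb f (Set.Ioi s), hpre]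

lemma integrableOn_Ioi_shift {f : ℝ → ℝ} (s : ℝ) :
    IntegrableOn (fun v => f (v + s)) (Set.Ioi (0:ℝ)) ↔ IntegrableOn f (Set.Ioi s) := by
  have hmp : MeasurePreserving (fun v : ℝ => v + s) volume volume :=
    measurePreserving_add_right volume s
  have hemb : MeasurableEmbedding (fun v : ℝ => v + s) :=
    (Homeomorph.addRight s).isClosedEmbedding.measurableEmbedding
  have hpre : (fun v : ℝ => v + s) ⁻¹' (Set.Ioi s) = Set.Ioi (0:ℝ) := by
    ext v; simp [Set.mem_Ioi]
  rw [← hpre]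
  exact hmp.integrableOn_comp_preimage hemb

lemma rpow_tail_integral {s : ℝ} (hα : α ∈ Set.Ioo (0:ℝ) 1) (hs : 0 < s) :
    ∫ v in Set.Ioi (0:ℝ), (s + v) ^ (-α - 1) = s ^ (-α) / α := by
  have h := integral_Ioi_shift' (fun w : ℝ => w ^ (-α - 1)) s
  simp only [show ∀ v : ℝ, v + s = s + v from fun v => add_comm v s] at h
  rw [← h, integral_Ioi_rpow_of_lt (by linarith [hα.1] : -α - 1 < -1) hs]
  have : -α - 1 + 1 = -α := by ring
  rw [this, neg_div_neg_eq]

lemma rpow_tail_integrable {s : ℝ} (hα : α ∈ Set.Ioo (0:ℝ) 1) (hs : 0 < s) :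
    IntegrableOn (fun v : ℝ => (s + v) ^ (-α - 1)) (Set.Ioi (0:ℝ)) := by
  have h := (integrableOn_Ioi_shift (f := fun w : ℝ => w ^ (-α - 1)) s).mpr
    (integrableOn_Ioi_rpow_of_lt (by linarith [hα.1] : -α - 1 < -1) hs)
  simpa only [show ∀ v : ℝ, v + s = s + v from fun v => add_comm v s] using h

lemma fubini_A (hα : α ∈ Set.Ioo (0:ℝ) 1) (hx : 0 < x) :
    ∫ s in Set.Ioc (0:ℝ) x, (x - s) ^ (α - 1) *
        ∫ v in Set.Ioi (0:ℝ), Real.exp (-v) * (s + v) ^ (-α - 1)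
      = ∫ v in Set.Ioi (0:ℝ), Real.exp (-v) * (x ^ α * v ^ (-α) / (α * (x + v))) := by
  obtain ⟨hα0, hα1⟩ := hα
  set μ := volume.restrict (Set.Ioc (0:ℝ) x)
  set ν := volume.restrict (Set.Ioi (0:ℝ))
  set f : ℝ → ℝ → ℝ := fun s v => (x - s) ^ (α - 1) * (Real.exp (-v) * (s + v) ^ (-α - 1))
    with hf
  have hmeas : AEStronglyMeasurable (Function.uncurry f) (μ.prod ν) := by
    apply Measurable.aestronglyMeasurable
    fun_prop
  have h1 : ∀ᵐ s ∂μ, Integrable (f s) ν := by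
    filter_upwards [ae_restrict_mem measurableSet_Ioc] with s hs
    apply Integrable.const_mul
    refine (rpow_tail_integrable ⟨hα0, hα1⟩ hs.1).mono'
      ((by fun_prop : Measurable fun v : ℝ =>
        Real.exp (-v) * (s + v) ^ (-α - 1)).aestronglyMeasurable) ?_
    filter_upwards [ae_restrict_mem measurableSet_Ioi] with v hv
    have h2 : (0:ℝ) < s + v := by have := hs.1; have := hv; simp at this ⊢; linarith [hs.1, Set.mem_Ioi.mp hv]
    rw [Real.norm_eq_abs, abs_of_nonneg (mul_nonneg (Real.exp_nonneg _) (Real.rpow_nonneg h2.le _))]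
    calc Real.exp (-v) * (s + v) ^ (-α - 1) ≤ 1 * (s + v) ^ (-α - 1) :=
          mul_le_mul_of_nonneg_right (Real.exp_le_one_iff.mpr (by linarith [Set.mem_Ioi.mp hv]))
            (Real.rpow_nonneg h2.le _)
      _ = (s + v) ^ (-α - 1) := one_mul _
  have h2 : Integrable (fun s => ∫ v, ‖f s v‖ ∂ν) μ := by
    have hbnd : IntegrableOn (fun s : ℝ => ((x - s) ^ (α - 1) * s ^ (-α)) / α)
        (Set.Ioc 0 x) := (beta_integrable ⟨hα0, hα1⟩ hx).div_const α
    refine hbnd.mono' (hmeas.norm.integral_prod_right') ?_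
    filter_upwards [ae_restrict_mem measurableSet_Ioc] with s hs
    have hs0 : 0 < s := hs.1
    have hxs : 0 ≤ x - s := by linarith [hs.2]
    have hnn : 0 ≤ ∫ v, ‖f s v‖ ∂ν := integral_nonneg fun v => norm_nonneg _
    rw [Real.norm_eq_abs, abs_of_nonneg hnn]
    have hint : Integrable (fun v => Real.exp (-v) * (s + v) ^ (-α - 1)) ν := by
      refine (rpow_tail_integrable ⟨hα0, hα1⟩ hs0).mono'
        ((by fun_prop : Measurable fun v : ℝ =>
          Real.exp (-v) * (s + v) ^ (-α - 1)).aestronglyMeasurable) ?_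
      filter_upwards [ae_restrict_mem measurableSet_Ioi] with v hv
      have h2 : (0:ℝ) < s + v := by linarith [Set.mem_Ioi.mp hv]
      rw [Real.norm_eq_abs, abs_of_nonneg (mul_nonneg (Real.exp_nonneg _)
        (Real.rpow_nonneg h2.le _))]
      calc Real.exp (-v) * (s + v) ^ (-α - 1) ≤ 1 * (s + v) ^ (-α - 1) :=
            mul_le_mul_of_nonneg_right (Real.exp_le_one_iff.mpr
              (by linarith [Set.mem_Ioi.mp hv])) (Real.rpow_nonneg h2.le _)
        _ = (s + v) ^ (-α - 1) := one_mul _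
    have hcalc : ∫ v, ‖f s v‖ ∂ν = (x - s) ^ (α - 1) *
        ∫ v, Real.exp (-v) * (s + v) ^ (-α - 1) ∂ν := by
      rw [← integral_const_mul]
      apply integral_congr_ae
      filter_upwards [ae_restrict_mem measurableSet_Ioi] with v hv
      have h2 : (0:ℝ) < s + v := by linarith [Set.mem_Ioi.mp hv]
      rw [hf]
      rw [Real.norm_eq_abs, abs_of_nonneg (mul_nonneg (Real.rpow_nonneg hxs _)
        (mul_nonneg (Real.exp_nonneg _) (Real.rpow_nonneg h2.le _)))]
    rw [hcalc]
    have hle : ∫ v, Real.exp (-v) * (s + v) ^ (-α - 1) ∂ν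
        ≤ ∫ v, (s + v) ^ (-α - 1) ∂ν := by
      refine integral_mono_ae hint (rpow_tail_integrable ⟨hα0, hα1⟩ hs0) ?_
      filter_upwards [ae_restrict_mem measurableSet_Ioi] with v hv
      have h2 : (0:ℝ) < s + v := by linarith [Set.mem_Ioi.mp hv]
      calc Real.exp (-v) * (s + v) ^ (-α - 1) ≤ 1 * (s + v) ^ (-α - 1) :=
            mul_le_mul_of_nonneg_right (Real.exp_le_one_iff.mpr
              (by linarith [Set.mem_Ioi.mp hv])) (Real.rpow_nonneg h2.le _)
        _ = (s + v) ^ (-α - 1) := one_mul _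
    calc (x - s) ^ (α - 1) * ∫ v, Real.exp (-v) * (s + v) ^ (-α - 1) ∂ν
        ≤ (x - s) ^ (α - 1) * ∫ v, (s + v) ^ (-α - 1) ∂ν :=
          mul_le_mul_of_nonneg_left hle (Real.rpow_nonneg hxs _)
      _ = (x - s) ^ (α - 1) * (s ^ (-α) / α) := by
          rw [show (∫ v, (s + v) ^ (-α - 1) ∂ν) = s ^ (-α) / α from
            rpow_tail_integral ⟨hα0, hα1⟩ hs0]
      _ = ((x - s) ^ (α - 1) * s ^ (-α)) / α := by ring
  have hInt : Integrable (Function.uncurry f) (μ.prod ν) :=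
    (integrable_prod_iff hmeas).mpr ⟨h1, h2⟩
  have hswap := integral_integral_swap hInt
  calc ∫ s in Set.Ioc (0:ℝ) x, (x - s) ^ (α - 1) *
          ∫ v in Set.Ioi (0:ℝ), Real.exp (-v) * (s + v) ^ (-α - 1)
      = ∫ s, (∫ v, f s v ∂ν) ∂μ := by
        apply integral_congr_ae (Filter.Eventually.of_forall fun s => ?_)
        rw [hf, integral_const_mul]
    _ = ∫ v, (∫ s, f s v ∂μ) ∂ν := hswap
    _ = ∫ v in Set.Ioi (0:ℝ), Real.exp (-v) * (x ^ α * v ^ (-α) / (α * (x + v))) := by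
        apply integral_congr_ae
        filter_upwards [ae_restrict_mem measurableSet_Ioi] with v hv
        have hv0 : (0:ℝ) < v := Set.mem_Ioi.mp hv
        have : ∫ s, f s v ∂μ = Real.exp (-v) *
            ∫ s in Set.Ioc (0:ℝ) x, (x - s) ^ (α - 1) * (s + v) ^ (-α - 1) := by
          rw [← integral_const_mul]
          apply integral_congr_ae (Filter.Eventually.of_forall fun s => ?_)
          rw [hf]; ring
        rw [this, inner_ftc ⟨hα0, hα1⟩ hx hv0]


lemma laplace_integrable (hα : α ∈ Set.Ioo (0:ℝ) 1) {w : ℝ} (hw : 0 < w) :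
    IntegrableOn (fun t : ℝ => Real.exp (-(w * t)) * t ^ (-α)) (Set.Ioi (0:ℝ)) := by
  have hg : IntegrableOn (fun t : ℝ => Real.exp (-t) * t ^ (-α)) (Set.Ioi (0:ℝ)) := by
    have := Real.GammaIntegral_convergent (by linarith [hα.2] : (0:ℝ) < 1 - α)
    simpa only [show (1:ℝ) - α - 1 = -α by ring] using this
  have h1 : IntegrableOn (fun t : ℝ => Real.exp (-(w * t)) * (w * t) ^ (-α))
      (Set.Ioi (0:ℝ)) := by
    have := (integrableOn_Ioi_comp_mul_left_iff
      (fun t : ℝ => Real.exp (-t) * t ^ (-α)) 0 hw).mpr (by simpa [mul_zero] using hg)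
    simpa using this
  have h2 := h1.const_mul (w ^ α)
  refine h2.congr ?_
  filter_upwards [ae_restrict_mem measurableSet_Ioi] with t ht
  have ht0 : (0:ℝ) < t := ht
  have hcan : w ^ α * w ^ (-α) = 1 := by rw [← Real.rpow_add hw]; simp
  rw [Real.mul_rpow hw.le ht0.le]
  calc w ^ α * (Real.exp (-(w * t)) * (w ^ (-α) * t ^ (-α)))
      = (w ^ α * w ^ (-α)) * (Real.exp (-(w * t)) * t ^ (-α)) := by ring
    _ = Real.exp (-(w * t)) * t ^ (-α) := by rw [hcan, one_mul]

lemma laplace_eval (hα : α ∈ Set.Ioo (0:ℝ) 1) {w : ℝ} (hw : 0 < w) :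
    ∫ t in Set.Ioi (0:ℝ), Real.exp (-(w * t)) * t ^ (-α)
      = Real.Gamma (1 - α) * w ^ (α - 1) := by
  have key := integral_comp_mul_left_Ioi (fun t : ℝ => Real.exp (-t) * t ^ (-α)) 0 hw
  rw [mul_zero] at key
  have hG : ∫ t in Set.Ioi (0:ℝ), Real.exp (-t) * t ^ (-α) = Real.Gamma (1 - α) := by
    rw [Real.Gamma_eq_integral (by linarith [hα.2] : (0:ℝ) < 1 - α)]
    simp only [show (1:ℝ) - α - 1 = -α by ring]
  rw [hG] at key
  have hsplit : ∫ t in Set.Ioi (0:ℝ), Real.exp (-(w * t)) * (w * t) ^ (-α)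
      = w ^ (-α) * ∫ t in Set.Ioi (0:ℝ), Real.exp (-(w * t)) * t ^ (-α) := by
    rw [← integral_const_mul]
    refine setIntegral_congr_fun measurableSet_Ioi fun t ht => ?_
    have ht0 : (0:ℝ) < t := ht
    rw [Real.mul_rpow hw.le ht0.le]; ring
  rw [hsplit, smul_eq_mul] at key
  have hI : ∫ t in Set.Ioi (0:ℝ), Real.exp (-(w * t)) * t ^ (-α)
      = w ^ α * (w⁻¹ * Real.Gamma (1 - α)) := by
    rw [← key, ← mul_assoc, ← Real.rpow_add hw]
    simp
  rw [hI, show w⁻¹ = w ^ (-1 : ℝ) from (Real.rpow_neg_one w).symm,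
    ← mul_assoc, ← Real.rpow_add hw, show α + (-1:ℝ) = α - 1 from by ring]
  exact mul_comm _ _

lemma fubini_B (hα : α ∈ Set.Ioo (0:ℝ) 1) (hx : 0 < x) :
    Real.Gamma (1 - α) * ∫ w in Set.Ioi x, Real.exp (-w) * w ^ (α - 1)
      = ∫ l in Set.Ioi (0:ℝ), l ^ (-α) * (Real.exp (-(x * (1 + l))) / (1 + l)) := by
  obtain ⟨hα0, hα1⟩ := hα
  set μ := volume.restrict (Set.Ioi x)
  set ν := volume.restrict (Set.Ioi (0:ℝ))
  set f : ℝ → ℝ → ℝ := fun w l => Real.exp (-(w * (1 + l))) * l ^ (-α) with hf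
  have hmeas : AEStronglyMeasurable (Function.uncurry f) (μ.prod ν) := by
    apply Measurable.aestronglyMeasurable; fun_prop
  have hinner : ∀ w : ℝ, 0 < w → ∫ l, f w l ∂ν
      = Real.exp (-w) * (Real.Gamma (1 - α) * w ^ (α - 1)) := by
    intro w hw
    have : ∀ l : ℝ, f w l = Real.exp (-w) * (Real.exp (-(w * l)) * l ^ (-α)) := by
      intro l
      simp only [hf]
      rw [show -(w * (1 + l)) = -w + -(w * l) from by ring, Real.exp_add, mul_assoc]
    simp only [this]
    rw [integral_const_mul, laplace_eval ⟨hα0, hα1⟩ hw]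
  have h1 : ∀ᵐ w ∂μ, Integrable (f w) ν := by
    filter_upwards [ae_restrict_mem measurableSet_Ioi] with w hw
    have hw0 : 0 < w := lt_trans hx hw
    have := (laplace_integrable ⟨hα0, hα1⟩ hw0).const_mul (Real.exp (-w))
    refine this.congr ?_
    filter_upwards with l
    simp only [hf]
    rw [show -(w * (1 + l)) = -w + -(w * l) from by ring, Real.exp_add, mul_assoc]
  have h2 : Integrable (fun w => ∫ l, ‖f w l‖ ∂ν) μ := by
    have hbnd : IntegrableOn (fun w : ℝ => Real.Gamma (1 - α) * (Real.exp (-w) * w ^ (α - 1)))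
        (Set.Ioi x) :=
      ((Real.GammaIntegral_convergent hα0).mono_set
        (Set.Ioi_subset_Ioi hx.le)).const_mul _
    refine hbnd.mono' (hmeas.norm.integral_prod_right') ?_
    filter_upwards [ae_restrict_mem measurableSet_Ioi] with w hw
    have hw0 : 0 < w := lt_trans hx hw
    have hnorm : ∀ᵐ l ∂ν, ‖f w l‖ = f w l := by
      filter_upwards [ae_restrict_mem measurableSet_Ioi] with l hl
      have hl0 : (0:ℝ) < l := hl
      rw [hf, Real.norm_eq_abs, abs_of_nonneg (mul_nonneg (Real.exp_nonneg _)
        (Real.rpow_nonneg hl0.le _))]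
    rw [Real.norm_eq_abs, abs_of_nonneg (integral_nonneg fun l => norm_nonneg _)]
    rw [integral_congr_ae hnorm, hinner w hw0]
    calc Real.exp (-w) * (Real.Gamma (1 - α) * w ^ (α - 1))
        = Real.Gamma (1 - α) * (Real.exp (-w) * w ^ (α - 1)) := by ring
      _ ≤ Real.Gamma (1 - α) * (Real.exp (-w) * w ^ (α - 1)) := le_rfl
  have hInt : Integrable (Function.uncurry f) (μ.prod ν) :=
    (integrable_prod_iff hmeas).mpr ⟨h1, h2⟩
  have hswap := integral_integral_swap hInt
  have hLHS : ∫ w, (∫ l, f w l ∂ν) ∂μ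
      = Real.Gamma (1 - α) * ∫ w in Set.Ioi x, Real.exp (-w) * w ^ (α - 1) := by
    rw [← integral_const_mul]
    apply integral_congr_ae
    filter_upwards [ae_restrict_mem measurableSet_Ioi] with w hw
    rw [hinner w (lt_trans hx hw)]
    ring
  have hRHS : ∫ l, (∫ w, f w l ∂μ) ∂ν
      = ∫ l in Set.Ioi (0:ℝ), l ^ (-α) * (Real.exp (-(x * (1 + l))) / (1 + l)) := by
    apply integral_congr_ae
    filter_upwards [ae_restrict_mem measurableSet_Ioi] with l hl
    have hl0 : (0:ℝ) < l := hl
    have hc : (0:ℝ) < 1 + l := by linarith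
    have hexp : ∫ w in Set.Ioi x, Real.exp (-((1 + l) * w)) = (1 + l)⁻¹ * Real.exp (-((1 + l) * x)) := by
      have := integral_comp_mul_left_Ioi (fun t : ℝ => Real.exp (-t)) x hc
      rw [integral_exp_neg_Ioi] at this
      rw [this, smul_eq_mul]
    calc ∫ w, f w l ∂μ = ∫ w in Set.Ioi x, l ^ (-α) * Real.exp (-((1 + l) * w)) := by
          apply integral_congr_ae (Filter.Eventually.of_forall fun w => ?_)
          simp only [hf]
          rw [show -(w * (1 + l)) = -((1 + l) * w) from by ring]
          ring
      _ = l ^ (-α) * ∫ w in Set.Ioi x, Real.exp (-((1 + l) * w)) := integral_const_mul _ _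
      _ = l ^ (-α) * (Real.exp (-(x * (1 + l))) / (1 + l)) := by
          rw [hexp, mul_comm (1 + l) x, div_eq_inv_mul]
  rw [← hLHS, hswap, hRHS]

lemma scaling_lemma (hα : α ∈ Set.Ioo (0:ℝ) 1) (hx : 0 < x) :
    ∫ l in Set.Ioi (0:ℝ), l ^ (-α) * (Real.exp (-(x * (1 + l))) / (1 + l))
      = Real.exp (-x) * x ^ α *
        ∫ v in Set.Ioi (0:ℝ), Real.exp (-v) * v ^ (-α) / (x + v) := by
  have key := integral_comp_mul_left_Ioi
    (fun v : ℝ => Real.exp (-v) * v ^ (-α) / (x + v)) 0 hx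
  rw [mul_zero, smul_eq_mul] at key
  -- key : ∫ l in Ioi 0, exp(-(x*l)) * (x*l)^(-α) / (x + x*l) = x⁻¹ * ∫ v in Ioi 0, ...
  have hcongr : ∫ l in Set.Ioi (0:ℝ), l ^ (-α) * (Real.exp (-(x * (1 + l))) / (1 + l))
      = Real.exp (-x) * x ^ (α + 1) *
        ∫ l in Set.Ioi (0:ℝ), Real.exp (-(x * l)) * (x * l) ^ (-α) / (x + x * l) := by
    rw [← integral_const_mul]
    refine setIntegral_congr_fun measurableSet_Ioi fun l hl => ?_
    have hl0 : (0:ℝ) < l := hl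
    have h1l : (0:ℝ) < 1 + l := by linarith
    rw [Real.mul_rpow hx.le hl0.le]
    have hxl : x + x * l = x * (1 + l) := by ring
    rw [hxl]
    rw [show -(x * (1 + l)) = -x + -(x * l) by ring, Real.exp_add]
    rw [Real.rpow_add hx, Real.rpow_one, Real.rpow_neg hx.le]
    field_simp
  rw [hcongr, key, Real.rpow_add hx, Real.rpow_one]
  field_simp

end TemperedAux

/-- For `α ∈ (0,1)` and `x > 0`, the lower-incomplete gamma function `u(x) = γ(α;x)`
(with `u'(y) = e^(-y) y^(α-1)`) solves the tempered relaxation equation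
`(α/Γ(1-α)) ∫_0^x u'(x-s) Γ(-α;s) ds = Γ(α) - u(x)`, where
`Γ(-α;s) = ∫_s^∞ e^(-w) w^(-α-1) dw` is the upper-incomplete gamma function. -/
theorem tempered_relaxation_equation (α : ℝ) (hα : α ∈ Set.Ioo (0:ℝ) 1)
    (x : ℝ) (hx : 0 < x) :
    (α / Real.Gamma (1 - α)) *
        ∫ s in (0:ℝ)..x,
          Real.exp (-(x - s)) * (x - s) ^ (α - 1) *
            ∫ w in Set.Ioi s, Real.exp (-w) * w ^ (-α - 1)
      = Real.Gamma α - ∫ w in (0:ℝ)..x, Real.exp (-w) * w ^ (α - 1) := by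
  obtain ⟨hα0, hα1⟩ := hα
  have hΓ : 0 < Real.Gamma (1 - α) := Real.Gamma_pos_of_pos (by linarith)
  have hL1 : (∫ s in (0:ℝ)..x, Real.exp (-(x - s)) * (x - s) ^ (α - 1) *
        ∫ w in Set.Ioi s, Real.exp (-w) * w ^ (-α - 1))
      = Real.exp (-x) * ∫ s in Set.Ioc (0:ℝ) x, (x - s) ^ (α - 1) *
          ∫ v in Set.Ioi (0:ℝ), Real.exp (-v) * (s + v) ^ (-α - 1) := by
    rw [intervalIntegral.integral_of_le hx.le, ← integral_const_mul]
    refine setIntegral_congr_fun measurableSet_Ioc fun s _ => ?_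
    rw [upper_gamma_shift α s]
    set H := ∫ v in Set.Ioi (0:ℝ), Real.exp (-v) * (s + v) ^ (-α - 1) with hH
    calc Real.exp (-(x - s)) * (x - s) ^ (α - 1) * (Real.exp (-s) * H)
        = (Real.exp (-(x - s)) * Real.exp (-s)) * ((x - s) ^ (α - 1) * H) := by ring
      _ = Real.exp (-x) * ((x - s) ^ (α - 1) * H) := by
          rw [← Real.exp_add, show -(x - s) + -s = -x from by ring]
  set K := ∫ v in Set.Ioi (0:ℝ), Real.exp (-v) * v ^ (-α) / (x + v) with hK
  have hL3 : (∫ v in Set.Ioi (0:ℝ), Real.exp (-v) * (x ^ α * v ^ (-α) / (α * (x + v))))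
      = (x ^ α / α) * K := by
    rw [hK, ← integral_const_mul]
    refine setIntegral_congr_fun measurableSet_Ioi fun v hv => ?_
    have hv0 : (0:ℝ) < v := hv
    have hxv : (0:ℝ) < x + v := by linarith
    field_simp
  have hγΓ : Real.Gamma α = (∫ w in (0:ℝ)..x, Real.exp (-w) * w ^ (α - 1))
      + ∫ w in Set.Ioi x, Real.exp (-w) * w ^ (α - 1) := by
    rw [Real.Gamma_eq_integral hα0, intervalIntegral.integral_of_le hx.le,
      ← Set.Ioc_union_Ioi_eq_Ioi hx.le,
      setIntegral_union (Set.Ioc_disjoint_Ioi le_rfl) measurableSet_Ioi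
        ((Real.GammaIntegral_convergent hα0).mono_set Set.Ioc_subset_Ioi_self)
        ((Real.GammaIntegral_convergent hα0).mono_set (Set.Ioi_subset_Ioi hx.le))]
  have hBS : Real.Gamma (1 - α) * ∫ w in Set.Ioi x, Real.exp (-w) * w ^ (α - 1)
      = Real.exp (-x) * x ^ α * K :=
    (fubini_B ⟨hα0, hα1⟩ hx).trans (scaling_lemma ⟨hα0, hα1⟩ hx)
  rw [hL1, fubini_A ⟨hα0, hα1⟩ hx, hL3]
  have hT : (∫ w in Set.Ioi x, Real.exp (-w) * w ^ (α - 1))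
      = Real.exp (-x) * x ^ α * K / Real.Gamma (1 - α) := by
    field_simp at hBS ⊢
    linarith [hBS]
  rw [show Real.Gamma α - (∫ w in (0:ℝ)..x, Real.exp (-w) * w ^ (α - 1))
      = ∫ w in Set.Ioi x, Real.exp (-w) * w ^ (α - 1) from by rw [hγΓ]; ring, hT]
  field_simp
end

section
/- Let α ∈ (0,1) and 0 < p < α. Then lim_{t→∞} t^{-p/α} · (α t / Γ(1-p)) ∫_0^∞ e^{-η - t α γ(α;η)} η^{α-p-1} dη = Γ(1 - p/α) / Γ(1-p). (This integral equals the fractional moment E[S_α(t)^p] of the subordinator with Laplace exponent αγ(α;·), so E[S_α(t)^p] ∼ (Γ(1-p/α)/Γ(1-p)) t^{p/α} as t → ∞.) -/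
open Real Set Filter MeasureTheory

noncomputable def fmGamma (α : ℝ) (x : ℝ) : ℝ := ∫ w in (0:ℝ)..x, Real.exp (-w) * w ^ (α - 1)

lemma fm_intInt {α : ℝ} (hα : 0 < α) (a b : ℝ) :
    IntervalIntegrable (fun w => Real.exp (-w) * w ^ (α - 1)) volume a b := by
  have h : IntervalIntegrable (fun w : ℝ => w ^ (α - 1)) volume a b :=
    intervalIntegral.intervalIntegrable_rpow' (by linarith)
  exact h.continuousOn_mul ((Real.continuous_exp.comp continuous_neg).continuousOn)

lemma fm_cont {α : ℝ} (hα : 0 < α) : Continuous (fmGamma α) :=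
  intervalIntegral.continuous_primitive (fun a b => fm_intInt hα a b) 0

lemma fm_lower {α : ℝ} (hα : 0 < α) {x : ℝ} (hx : 0 ≤ x) :
    Real.exp (-x) * (x ^ α / α) ≤ fmGamma α x := by
  have h0 : ∫ w in (0:ℝ)..x, Real.exp (-x) * w ^ (α - 1) ≤ fmGamma α x := by
    refine intervalIntegral.integral_mono_on hx
      ((intervalIntegral.intervalIntegrable_rpow' (by linarith)).const_mul _)
      (fm_intInt hα 0 x) (fun w hw => ?_)
    exact mul_le_mul_of_nonneg_right (Real.exp_le_exp.2 (by linarith [hw.2]))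
      (Real.rpow_nonneg hw.1 _)
  have h1 : ∫ w in (0:ℝ)..x, Real.exp (-x) * w ^ (α - 1)
      = Real.exp (-x) * (x ^ α / α) := by
    rw [intervalIntegral.integral_const_mul, integral_rpow (Or.inl (by linarith))]
    rw [Real.zero_rpow (by linarith : α - 1 + 1 ≠ 0)]
    ring_nf
  linarith [h0, h1.symm.le, h1.le]

lemma fm_upper {α : ℝ} (hα : 0 < α) {x : ℝ} (hx : 0 ≤ x) :
    fmGamma α x ≤ x ^ α / α := by
  have h0 : fmGamma α x ≤ ∫ w in (0:ℝ)..x, w ^ (α - 1) := by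
    refine intervalIntegral.integral_mono_on hx (fm_intInt hα 0 x)
      (intervalIntegral.intervalIntegrable_rpow' (by linarith)) (fun w hw => ?_)
    calc Real.exp (-w) * w ^ (α - 1) ≤ 1 * w ^ (α - 1) :=
          mul_le_mul_of_nonneg_right (Real.exp_le_one_iff.mpr (by linarith [hw.1]))
            (Real.rpow_nonneg hw.1 _)
      _ = w ^ (α - 1) := one_mul _
  have h1 : ∫ w in (0:ℝ)..x, w ^ (α - 1) = x ^ α / α := by
    rw [integral_rpow (Or.inl (by linarith))]
    rw [Real.zero_rpow (by linarith : α - 1 + 1 ≠ 0)]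
    ring_nf
  linarith

lemma fm_mono {α : ℝ} (hα : 0 < α) {a b : ℝ} (ha : 0 ≤ a) (hab : a ≤ b) :
    fmGamma α a ≤ fmGamma α b := by
  have : fmGamma α a + ∫ w in a..b, Real.exp (-w) * w ^ (α - 1) = fmGamma α b :=
    intervalIntegral.integral_add_adjacent_intervals (fm_intInt hα 0 a) (fm_intInt hα a b)
  have hnn : 0 ≤ ∫ w in a..b, Real.exp (-w) * w ^ (α - 1) :=
    intervalIntegral.integral_nonneg hab (fun u hu =>
      mul_nonneg (Real.exp_nonneg _) (Real.rpow_nonneg (le_trans ha hu.1) _))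
  linarith

lemma fm_ratio_tendsto {α : ℝ} (hα : 0 < α) :
    Tendsto (fun x => α * fmGamma α x / x ^ α) (nhdsWithin 0 (Ioi 0)) (nhds 1) := by
  have hg : Tendsto (fun x : ℝ => Real.exp (-x)) (nhdsWithin 0 (Ioi 0)) (nhds 1) := by
    have := (Real.continuous_exp.comp continuous_neg).tendsto 0
    simp only [Function.comp, neg_zero, Real.exp_zero] at this
    exact this.mono_left nhdsWithin_le_nhds
  refine tendsto_of_tendsto_of_tendsto_of_le_of_le' hg tendsto_const_nhds ?_ ?_
  · filter_upwards [self_mem_nhdsWithin] with x (hx : 0 < x)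
    have hxa : 0 < x ^ α := Real.rpow_pos_of_pos hx α
    rw [le_div_iff₀ hxa]
    have := fm_lower hα hx.le
    calc Real.exp (-x) * x ^ α = α * (Real.exp (-x) * (x ^ α / α)) := by
          field_simp
      _ ≤ α * fmGamma α x := by
          exact mul_le_mul_of_nonneg_left this hα.le
  · filter_upwards [self_mem_nhdsWithin] with x (hx : 0 < x)
    have hxa : 0 < x ^ α := Real.rpow_pos_of_pos hx α
    rw [div_le_one hxa]
    have := fm_upper hα hx.le
    calc α * fmGamma α x ≤ α * (x ^ α / α) := mul_le_mul_of_nonneg_left this hα.le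
      _ = x ^ α := by field_simp

lemma fm_integrable_aux {s b q : ℝ} (hs : -1 < s) (hq : 0 < q) (hb : 0 < b) :
    IntegrableOn (fun x : ℝ => x ^ s * Real.exp (-(b * x ^ q))) (Ioi 0) := by
  have hs' : -1 < (s + 1) / q - 1 := by
    have : 0 < (s + 1) / q := div_pos (by linarith) hq
    linarith
  have hf : IntegrableOn (fun y : ℝ => y ^ ((s + 1) / q - 1) * Real.exp (-(b * y))) (Ioi 0) := by
    have := integrableOn_rpow_mul_exp_neg_mul_rpow hs' (zero_lt_one (α := ℝ)) hb
    refine this.congr_fun (fun x hx => ?_) measurableSet_Ioi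
    dsimp only
    rw [Real.rpow_one, neg_mul]
  have key := (integrableOn_Ioi_comp_rpow_iff'
    (fun y : ℝ => y ^ ((s + 1) / q - 1) * Real.exp (-(b * y))) (ne_of_gt hq)).2 hf
  refine key.congr_fun (fun x hx => ?_) measurableSet_Ioi
  have hx0 : (0:ℝ) < x := hx
  dsimp only
  rw [smul_eq_mul, ← Real.rpow_mul hx0.le, ← mul_assoc, ← Real.rpow_add hx0]
  congr 2
  field_simp
  ring

lemma fm_pow_inv {α t : ℝ} (hα0 : 0 < α) (ht : 0 < t) :
    (t ^ (-α⁻¹)) ^ α = t⁻¹ := by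
  rw [← Real.rpow_mul ht.le]
  rw [show -α⁻¹ * α = -1 by field_simp]
  exact Real.rpow_neg_one t

lemma fm_bound {α : ℝ} (hα0 : 0 < α) {t u : ℝ} (ht : 1 ≤ t) (hu : 0 < u) :
    Real.exp (-(t ^ (-α⁻¹) * u) - t * (α * fmGamma α (t ^ (-α⁻¹) * u)))
      ≤ Real.exp (-(Real.exp (-1) * u ^ α))
        + Real.exp (-(Real.exp (-(1 + α)⁻¹) * u ^ (α / (1 + α)))) := by
  have ht0 : (0:ℝ) < t := lt_of_lt_of_le one_pos ht
  set c : ℝ := t ^ (-α⁻¹) with hc_def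
  have hc : 0 < c := Real.rpow_pos_of_pos ht0 _
  set η : ℝ := c * u with hη_def
  have hη : 0 < η := mul_pos hc hu
  have hca : c ^ α = t⁻¹ := fm_pow_inv hα0 ht0
  have htη : t * η ^ α = u ^ α := by
    rw [hη_def, Real.mul_rpow hc.le hu.le, hca, ← mul_assoc, mul_inv_cancel₀ ht0.ne', one_mul]
  rcases le_or_gt η 1 with hη1 | hη1
  · -- small η case
    have hγ : Real.exp (-1) * (η ^ α / α) ≤ fmGamma α η := by
      refine le_trans ?_ (fm_lower hα0 hη.le)
      exact mul_le_mul_of_nonneg_right (Real.exp_le_exp.2 (by linarith))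
        (div_nonneg (Real.rpow_nonneg hη.le _) hα0.le)
    have h2 : Real.exp (-1) * u ^ α ≤ t * (α * fmGamma α η) := by
      have heq : t * (α * (Real.exp (-1) * (η ^ α / α))) = Real.exp (-1) * (t * η ^ α) := by
        field_simp
      calc Real.exp (-1) * u ^ α = Real.exp (-1) * (t * η ^ α) := by rw [htη]
        _ = t * (α * (Real.exp (-1) * (η ^ α / α))) := heq.symm
        _ ≤ t * (α * fmGamma α η) := by
            apply mul_le_mul_of_nonneg_left _ ht0.le
            exact mul_le_mul_of_nonneg_left hγ hα0.le
    refine le_trans (le_trans (Real.exp_le_exp.2 (by linarith)) le_rfl)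
      (le_add_of_nonneg_right (Real.exp_nonneg _))
  · -- large η case
    set θ : ℝ := (1 + α)⁻¹ with hθ_def
    have h1α : (0:ℝ) < 1 + α := by linarith
    have hθ0 : 0 < θ := inv_pos.2 h1α
    have hθ1 : θ ≤ 1 := by
      rw [hθ_def]
      rw [inv_le_one_iff₀]; right; linarith
    have h1θ : 1 - θ = α / (1 + α) := by rw [hθ_def]; field_simp; ring
    have hγ : Real.exp (-1) / α ≤ fmGamma α η := by
      refine le_trans ?_ (fm_mono hα0 zero_le_one hη1.le)
      have := fm_lower hα0 (zero_le_one (α := ℝ))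
      rwa [Real.one_rpow, mul_one_div] at this
    have h2 : Real.exp (-1) * t ≤ t * (α * fmGamma α η) := by
      have : t * (α * (Real.exp (-1) / α)) = Real.exp (-1) * t := by field_simp
      calc Real.exp (-1) * t = t * (α * (Real.exp (-1) / α)) := this.symm
        _ ≤ t * (α * fmGamma α η) := by
            apply mul_le_mul_of_nonneg_left _ ht0.le
            exact mul_le_mul_of_nonneg_left hγ hα0.le
    have hAM : (Real.exp (-1) * t) ^ θ * η ^ (1 - θ)
        ≤ θ * (Real.exp (-1) * t) + (1 - θ) * η :=
      Real.geom_mean_le_arith_mean2_weighted hθ0.le (by linarith)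
        (mul_nonneg (Real.exp_nonneg _) ht0.le) hη.le (by ring)
    have hgeom : (Real.exp (-1) * t) ^ θ * η ^ (1 - θ)
        = Real.exp (-θ) * u ^ (1 - θ) := by
      have he : -α⁻¹ * (1 - θ) = -θ := by
        rw [hθ_def]; field_simp; ring
      rw [Real.mul_rpow (Real.exp_nonneg _) ht0.le, hη_def,
        Real.mul_rpow hc.le hu.le, hc_def, ← Real.rpow_mul ht0.le, ← Real.exp_mul, he,
        show (-1) * θ = -θ by ring]
      have htt : t ^ θ * t ^ (-θ) = 1 := by
        rw [← Real.rpow_add ht0]; simp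
      calc Real.exp (-θ) * t ^ θ * (t ^ (-θ) * u ^ (1 - θ))
          = Real.exp (-θ) * (t ^ θ * t ^ (-θ)) * u ^ (1-θ) := by ring
        _ = Real.exp (-θ) * u ^ (1 - θ) := by rw [htt]; ring
    have hsum : θ * (Real.exp (-1) * t) + (1 - θ) * η ≤ t * (α * fmGamma α η) + η := by
      have e1 : θ * (Real.exp (-1) * t) ≤ Real.exp (-1) * t := by
        nlinarith [mul_nonneg (Real.exp_nonneg (-1 : ℝ)) ht0.le]
      have e2 : (1 - θ) * η ≤ η := by nlinarith
      linarith
    have hfin : Real.exp (-θ) * u ^ (1 - θ) ≤ t * (α * fmGamma α η) + η := by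
      rw [← hgeom]; linarith
    rw [← h1θ]
    exact le_trans (Real.exp_le_exp.2 (by linarith))
      (le_add_of_nonneg_left (Real.exp_nonneg _))

lemma fm_tendsto_pt {α : ℝ} (hα0 : 0 < α) {u : ℝ} (hu : 0 < u) :
    Tendsto (fun t : ℝ => Real.exp (-(t ^ (-α⁻¹) * u) - t * (α * fmGamma α (t ^ (-α⁻¹) * u))))
      atTop (nhds (Real.exp (-u ^ α))) := by
  have h1 : Tendsto (fun t : ℝ => t ^ (-α⁻¹) * u) atTop (nhds 0) := by
    have := (tendsto_rpow_neg_atTop (inv_pos.2 hα0)).mul_const u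
    simpa using this
  have h1' : Tendsto (fun t : ℝ => t ^ (-α⁻¹) * u) atTop (nhdsWithin 0 (Ioi 0)) := by
    refine tendsto_nhdsWithin_of_tendsto_nhds_of_eventually_within _ h1 ?_
    filter_upwards [eventually_gt_atTop (0:ℝ)] with t ht
    exact mul_pos (Real.rpow_pos_of_pos ht _) hu
  have h2 : Tendsto (fun t : ℝ =>
      α * fmGamma α (t ^ (-α⁻¹) * u) / (t ^ (-α⁻¹) * u) ^ α) atTop (nhds 1) :=
    (fm_ratio_tendsto hα0).comp h1'
  have h3 : Tendsto (fun t : ℝ =>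
      u ^ α * (α * fmGamma α (t ^ (-α⁻¹) * u) / (t ^ (-α⁻¹) * u) ^ α)) atTop
      (nhds (u ^ α)) := by
    have := h2.const_mul (u ^ α)
    simpa using this
  have h4 : (fun t : ℝ => u ^ α * (α * fmGamma α (t ^ (-α⁻¹) * u) / (t ^ (-α⁻¹) * u) ^ α))
      =ᶠ[atTop] fun t : ℝ => t * (α * fmGamma α (t ^ (-α⁻¹) * u)) := by
    filter_upwards [eventually_gt_atTop (0:ℝ)] with t ht
    have hc : (0:ℝ) < t ^ (-α⁻¹) := Real.rpow_pos_of_pos ht _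
    have hpow : (t ^ (-α⁻¹) * u) ^ α = t⁻¹ * u ^ α := by
      rw [Real.mul_rpow hc.le hu.le, fm_pow_inv hα0 ht]
    rw [hpow]
    have hu0 : u ^ α ≠ 0 := (Real.rpow_pos_of_pos hu α).ne'
    field_simp
  have h5 : Tendsto (fun t : ℝ => t * (α * fmGamma α (t ^ (-α⁻¹) * u))) atTop
      (nhds (u ^ α)) := h3.congr' h4
  have h6 : Tendsto (fun t : ℝ => -(t ^ (-α⁻¹) * u) - t * (α * fmGamma α (t ^ (-α⁻¹) * u)))
      atTop (nhds (-u ^ α)) := by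
    have := (h1.neg).sub h5
    simpa using this
  exact (Real.continuous_exp.tendsto _).comp h6

lemma fm_subst {α p t : ℝ} (hα0 : 0 < α) (ht : 0 < t) :
    t ^ (-(p / α)) * (α * t / Real.Gamma (1 - p)) *
      ∫ η in Ioi (0:ℝ), Real.exp (-η - t * (α * fmGamma α η)) * η ^ (α - p - 1)
    = α / Real.Gamma (1 - p) *
      ∫ u in Ioi (0:ℝ),
        Real.exp (-(t ^ (-α⁻¹) * u) - t * (α * fmGamma α (t ^ (-α⁻¹) * u))) * u ^ (α - p - 1) := by
  set c : ℝ := t ^ (-α⁻¹) with hc_def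
  have hc : 0 < c := Real.rpow_pos_of_pos ht _
  have hsub := integral_comp_mul_left_Ioi
    (fun η => Real.exp (-η - t * (α * fmGamma α η)) * η ^ (α - p - 1)) 0 hc
  rw [mul_zero] at hsub
  have h2 : (∫ η in Ioi (0:ℝ), Real.exp (-η - t * (α * fmGamma α η)) * η ^ (α - p - 1))
      = c * ∫ x in Ioi (0:ℝ),
          Real.exp (-(c * x) - t * (α * fmGamma α (c * x))) * (c * x) ^ (α - p - 1) := by
    rw [hsub, smul_eq_mul, ← mul_assoc, mul_inv_cancel₀ hc.ne', one_mul]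
  have h3 : (∫ x in Ioi (0:ℝ),
        Real.exp (-(c * x) - t * (α * fmGamma α (c * x))) * (c * x) ^ (α - p - 1))
      = c ^ (α - p - 1) * ∫ x in Ioi (0:ℝ),
          Real.exp (-(c * x) - t * (α * fmGamma α (c * x))) * x ^ (α - p - 1) := by
    rw [← MeasureTheory.integral_const_mul]
    refine setIntegral_congr_fun measurableSet_Ioi (fun x hx => ?_)
    rw [Real.mul_rpow hc.le (le_of_lt hx)]
    ring
  have key : t ^ (-(p / α)) * t * (c * c ^ (α - p - 1)) = 1 := by
    have hcc : c * c ^ (α - p - 1) = c ^ (α - p) := by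
      nth_rewrite 1 [← Real.rpow_one c]
      rw [← Real.rpow_add hc]
      ring_nf
    rw [hcc, hc_def, ← Real.rpow_mul ht.le]
    nth_rewrite 2 [← Real.rpow_one t]
    rw [← Real.rpow_add ht, ← Real.rpow_add ht]
    rw [show -(p / α) + 1 + -α⁻¹ * (α - p) = 0 by field_simp; ring]
    exact Real.rpow_zero t
  rw [h2, h3]
  calc t ^ (-(p / α)) * (α * t / Real.Gamma (1 - p)) *
        (c * (c ^ (α - p - 1) * ∫ x in Ioi (0:ℝ),
          Real.exp (-(c * x) - t * (α * fmGamma α (c * x))) * x ^ (α - p - 1)))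
      = α / Real.Gamma (1 - p) * (t ^ (-(p / α)) * t * (c * c ^ (α - p - 1))) *
        ∫ x in Ioi (0:ℝ),
          Real.exp (-(c * x) - t * (α * fmGamma α (c * x))) * x ^ (α - p - 1) := by ring
    _ = _ := by rw [key]; ring


/-- For `α ∈ (0,1)` and `0 < p < α`, the fractional moment
`E[S_α(t)^p] = (αt/Γ(1-p)) ∫_0^∞ e^(-η - tαγ(α;η)) η^(α-p-1) dη` satisfies
`t^(-p/α) E[S_α(t)^p] → Γ(1-p/α)/Γ(1-p)` as `t → ∞`. -/
theorem fractional_moment_asymptotics (α p : ℝ) (hα : α ∈ Set.Ioo (0:ℝ) 1)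
    (hp : 0 < p) (hpα : p < α) :
    Filter.Tendsto
      (fun t : ℝ =>
        t ^ (-(p / α)) * (α * t / Real.Gamma (1 - p)) *
          ∫ η in Set.Ioi (0:ℝ),
            Real.exp (-η - t * (α * ∫ w in (0:ℝ)..η, Real.exp (-w) * w ^ (α - 1)))
              * η ^ (α - p - 1))
      Filter.atTop (nhds (Real.Gamma (1 - p / α) / Real.Gamma (1 - p))) := by
  obtain ⟨hα0, hα1⟩ := hα
  have hΓ : Real.Gamma (1 - p) ≠ 0 := (Real.Gamma_pos_of_pos (by linarith)).ne'
  have hs : -1 < α - p - 1 := by linarith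
  have h1α : (0:ℝ) < 1 + α := by linarith
  have hq2 : 0 < α / (1 + α) := div_pos hα0 h1α
  set bound : ℝ → ℝ := fun u =>
    (Real.exp (-(Real.exp (-1) * u ^ α))
      + Real.exp (-(Real.exp (-(1 + α)⁻¹) * u ^ (α / (1 + α))))) * u ^ (α - p - 1)
    with hbound_def
  -- integrability of the bound
  have hbi : Integrable bound (volume.restrict (Ioi (0:ℝ))) := by
    have i1 : IntegrableOn
        (fun u : ℝ => u ^ (α - p - 1) * Real.exp (-(Real.exp (-1) * u ^ α))) (Ioi 0) :=
      fm_integrable_aux hs hα0 (Real.exp_pos _)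
    have i2 : IntegrableOn (fun u : ℝ =>
        u ^ (α - p - 1) * Real.exp (-(Real.exp (-(1 + α)⁻¹) * u ^ (α / (1 + α))))) (Ioi 0) :=
      fm_integrable_aux hs hq2 (Real.exp_pos _)
    refine IntegrableOn.congr_fun (i1.add i2) (fun x hx => ?_) measurableSet_Ioi
    simp only [hbound_def, Pi.add_apply]
    ring
  -- limit of the rescaled integrals
  have hI : Tendsto (fun t : ℝ => ∫ u in Ioi (0:ℝ),
        Real.exp (-(t ^ (-α⁻¹) * u) - t * (α * fmGamma α (t ^ (-α⁻¹) * u))) * u ^ (α - p - 1))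
      atTop (nhds (∫ u in Ioi (0:ℝ), Real.exp (-u ^ α) * u ^ (α - p - 1))) := by
    refine tendsto_integral_filter_of_dominated_convergence bound ?_ ?_ hbi ?_
    · filter_upwards with t
      refine ContinuousOn.aestronglyMeasurable (ContinuousOn.mul ?_ ?_) measurableSet_Ioi
      · refine Continuous.continuousOn (Real.continuous_exp.comp ?_)
        exact ((continuous_const.mul continuous_id).neg).sub
          (continuous_const.mul (continuous_const.mul
            ((fm_cont hα0).comp (continuous_const.mul continuous_id))))
      · exact ContinuousOn.rpow_const continuousOn_id
          (fun x hx => Or.inl (ne_of_gt hx))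
    · filter_upwards [eventually_ge_atTop (1:ℝ)] with t ht
      rw [ae_restrict_iff' measurableSet_Ioi]
      filter_upwards with u hu
      rw [Real.norm_eq_abs, abs_of_nonneg
        (mul_nonneg (Real.exp_nonneg _) (Real.rpow_nonneg (le_of_lt hu) _))]
      exact mul_le_mul_of_nonneg_right (fm_bound hα0 ht hu) (Real.rpow_nonneg (le_of_lt hu) _)
    · rw [ae_restrict_iff' measurableSet_Ioi]
      filter_upwards with u hu
      exact (fm_tendsto_pt hα0 hu).mul_const _
  -- value of the limiting integral
  have hval : (∫ u in Ioi (0:ℝ), Real.exp (-u ^ α) * u ^ (α - p - 1))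
      = Real.Gamma (1 - p / α) / α := by
    rw [setIntegral_congr_fun measurableSet_Ioi
      (fun x _ => mul_comm (Real.exp (-x ^ α)) (x ^ (α - p - 1)))]
    rw [integral_rpow_mul_exp_neg_rpow hα0 hs,
      show (α - p - 1 + 1) / α = 1 - p / α by field_simp; ring,
      one_div, inv_mul_eq_div]
  have hmain : Tendsto (fun t : ℝ => α / Real.Gamma (1 - p) * ∫ u in Ioi (0:ℝ),
        Real.exp (-(t ^ (-α⁻¹) * u) - t * (α * fmGamma α (t ^ (-α⁻¹) * u))) * u ^ (α - p - 1))
      atTop (nhds (Real.Gamma (1 - p / α) / Real.Gamma (1 - p))) := by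
    have := hI.const_mul (α / Real.Gamma (1 - p))
    rw [hval] at this
    convert this using 2
    field_simp
  refine hmain.congr' ?_
  filter_upwards [eventually_gt_atTop (0:ℝ)] with t ht
  exact (fm_subst hα0 ht).symm
end

section
/- For every α ∈ (0,1), every θ > 0 and every η ≥ 0, ∫_1^∞ (1 - e^{-ηx}) · (α/Γ(1-α)) (x-1)^{-α} x^{-1} e^{-θx} dx = α ∫_θ^{θ+η} e^{-w} w^{α-1} dw = α γ(α; η+θ) - α γ(α; θ). Hence φ_θ(η) = αγ(α;η+θ) - αγ(α;θ) is the Laplace exponent of the tempered subordinator S_{α,θ} with zero drift, zero killing and Lévy density (α/Γ(1-α))(x-1)^{-α} x^{-1} e^{-θx} 1_{x≥1}. -/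
open Real Set MeasureTheory

/-- Elementary exponential interval integral. -/
lemma my_integral_exp_neg_mul (x a b : ℝ) (hx : x ≠ 0) :
    ∫ w in a..b, Real.exp (-(w * x)) = (Real.exp (-(a * x)) - Real.exp (-(b * x))) / x := by
  have h : ∀ w ∈ Set.uIcc a b,
      HasDerivAt (fun u => -(Real.exp (-(u * x)) / x)) (Real.exp (-(w * x))) w := by
    intro w _
    have h1 : HasDerivAt (fun u : ℝ => -(u * x)) (-x) w := by
      have h0 := ((hasDerivAt_id w).mul_const x).neg
      rwa [one_mul] at h0
    have h2 : HasDerivAt (fun u : ℝ => Real.exp (-(u * x))) (Real.exp (-(w * x)) * (-x)) w :=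
      (Real.hasDerivAt_exp _).comp w h1
    have h3 := (h2.div_const x).neg
    refine h3.congr_deriv ?_
    rw [mul_neg, neg_div, neg_neg, mul_div_assoc, div_self hx, mul_one]
  rw [intervalIntegral.integral_eq_sub_of_hasDerivAt h
    ((Real.continuous_exp.comp ((continuous_id.mul continuous_const).neg)).intervalIntegrable a b)]
  ring

lemma my_shift_preimage : ((fun x : ℝ => x + 1) ⁻¹' (Set.Ioi 1)) = Set.Ioi 0 := by
  ext x
  simp only [Set.mem_preimage, Set.mem_Ioi]
  constructor <;> intro h <;> linarith

lemma my_shift_setIntegral (g : ℝ → ℝ) :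
    ∫ x in Set.Ioi (1:ℝ), g x = ∫ t in Set.Ioi (0:ℝ), g (t + 1) := by
  have hmp := measurePreserving_add_right (volume : Measure ℝ) 1
  have hemb : MeasurableEmbedding (fun x : ℝ => x + 1) :=
    (Homeomorph.addRight (1:ℝ)).measurableEmbedding
  have := hmp.setIntegral_preimage_emb hemb g (Set.Ioi 1)
  rw [my_shift_preimage] at this
  exact this.symm

lemma my_shift_integrableOn {g : ℝ → ℝ} (h : IntegrableOn (fun t => g (t + 1)) (Set.Ioi 0)) :
    IntegrableOn g (Set.Ioi 1) := by
  have hmp := measurePreserving_add_right (volume : Measure ℝ) 1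
  have hemb : MeasurableEmbedding (fun x : ℝ => x + 1) :=
    (Homeomorph.addRight (1:ℝ)).measurableEmbedding
  rw [← hmp.integrableOn_comp_preimage hemb (f := g) (s := Set.Ioi 1), my_shift_preimage]
  exact h

/-- Integrability of `t^(-α) e^(-θ t)` on `(0,∞)`. -/
lemma my_base_integrable {α θ : ℝ} (hα : α < 1) (hθ : 0 < θ) :
    IntegrableOn (fun t : ℝ => t ^ (-α) * Real.exp (-(θ * t))) (Set.Ioi 0) := by
  have h := integrableOn_rpow_mul_exp_neg_mul_rpow (s := -α) (p := 1) (b := θ)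
    (by linarith) one_pos hθ
  refine h.congr_fun (fun t ht => ?_) measurableSet_Ioi
  beta_reduce
  rw [Real.rpow_one]
  ring_nf

/-- Integrability of `(x-1)^(-α) e^(-θ x)` on `(1,∞)`. -/
lemma my_shifted_integrable {α θ : ℝ} (hα : α < 1) (hθ : 0 < θ) :
    IntegrableOn (fun x : ℝ => (x - 1) ^ (-α) * Real.exp (-(θ * x))) (Set.Ioi 1) := by
  apply my_shift_integrableOn
  have h : IntegrableOn (fun t : ℝ => t ^ (-α) * Real.exp (-(θ * t)) * Real.exp (-θ))
      (Set.Ioi 0) := (my_base_integrable hα hθ).mul_const (Real.exp (-θ))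
  refine h.congr_fun (fun t ht => ?_) measurableSet_Ioi
  beta_reduce
  rw [add_sub_cancel_right, show -(θ * (t + 1)) = -(θ * t) + -θ by ring, Real.exp_add, mul_assoc]

/-- For `α ∈ (0,1)`, `θ > 0`, `η ≥ 0`, the Lévy–Khintchine integral of the tempered
Lévy density `(α/Γ(1-α)) (x-1)^(-α) x⁻¹ e^(-θx)` on `(1,∞)` equals
`α ∫_θ^(θ+η) e^(-w) w^(α-1) dw = α γ(α;η+θ) - α γ(α;θ)`. -/
theorem tempered_laplace_exponent (α θ : ℝ) (hα : α ∈ Set.Ioo (0:ℝ) 1) (hθ : 0 < θ)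
    (η : ℝ) (hη : 0 ≤ η) :
    (∫ x in Set.Ioi (1:ℝ),
        (1 - Real.exp (-η * x)) * (α / Real.Gamma (1 - α)) * (x - 1) ^ (-α) * x⁻¹
          * Real.exp (-θ * x)
      = α * ∫ w in θ..(θ + η), Real.exp (-w) * w ^ (α - 1)) ∧
    α * (∫ w in θ..(θ + η), Real.exp (-w) * w ^ (α - 1))
      = α * (∫ w in (0:ℝ)..(η + θ), Real.exp (-w) * w ^ (α - 1))
        - α * ∫ w in (0:ℝ)..θ, Real.exp (-w) * w ^ (α - 1) := by
  obtain ⟨hα0, hα1⟩ := hα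
  have hG : 0 < Real.Gamma (1 - α) := Real.Gamma_pos_of_pos (by linarith)
  have hle : θ ≤ θ + η := by linarith
  set G := Real.Gamma (1 - α) with hGdef
  constructor
  · -- main computation
    -- Step 1: rewrite the integrand as an inner integral over w
    have step1 : ∀ x ∈ Set.Ioi (1:ℝ),
        (1 - Real.exp (-η * x)) * (α / G) * (x - 1) ^ (-α) * x⁻¹ * Real.exp (-θ * x)
          = ∫ w in Set.Ioc θ (θ + η), (α / G) * ((x - 1) ^ (-α) * Real.exp (-(w * x))) := by
      intro x hx
      have hx1 : (1:ℝ) < x := hx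
      have hx0 : x ≠ 0 := by positivity
      rw [← intervalIntegral.integral_of_le hle, intervalIntegral.integral_const_mul,
        intervalIntegral.integral_const_mul, my_integral_exp_neg_mul x θ (θ + η) hx0]
      rw [show -((θ + η) * x) = -(θ * x) + -η * x by ring, Real.exp_add,
        show -(θ * x) = -θ * x by ring]
      field_simp
    rw [setIntegral_congr_fun measurableSet_Ioi step1]
    -- Step 2: Fubini
    have hprodmeas : AEStronglyMeasurable
        (fun p : ℝ × ℝ => (α / G) * ((p.1 - 1) ^ (-α) * Real.exp (-(p.2 * p.1))))
        ((volume.restrict (Set.Ioi 1)).prod (volume.restrict (Set.Ioc θ (θ + η)))) := by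
      apply Measurable.aestronglyMeasurable
      fun_prop
    have hint : Integrable
        (fun p : ℝ × ℝ => (α / G) * ((p.1 - 1) ^ (-α) * Real.exp (-(p.2 * p.1))))
        ((volume.restrict (Set.Ioi 1)).prod (volume.restrict (Set.Ioc θ (θ + η)))) := by
      rw [MeasureTheory.integrable_prod_iff hprodmeas]
      constructor
      · refine Filter.Eventually.of_forall (fun x => ?_)
        have : IntegrableOn (fun w : ℝ => α / G * ((x - 1) ^ (-α) * Real.exp (-(w * x))))
            (Set.Ioc θ (θ + η)) := Continuous.integrableOn_Ioc (by fun_prop)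
        exact this
      · have hbound : ∀ᵐ x ∂(volume.restrict (Set.Ioi (1:ℝ))),
            ‖∫ w in Set.Ioc θ (θ + η),
              ‖(α / G) * ((x - 1) ^ (-α) * Real.exp (-(w * x)))‖‖
            ≤ (|α / G| * ((x - 1) ^ (-α) * Real.exp (-(θ * x)))) * η := by
          filter_upwards [ae_restrict_mem measurableSet_Ioi] with x hx
          have hx1 : (1:ℝ) < x := hx
          have hpow : (0:ℝ) ≤ (x - 1) ^ (-α) := Real.rpow_nonneg (by linarith) _
          have key : ‖∫ w in Set.Ioc θ (θ + η),
              ‖(α / G) * ((x - 1) ^ (-α) * Real.exp (-(w * x)))‖‖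
              ≤ (|α / G| * ((x - 1) ^ (-α) * Real.exp (-(θ * x))))
                * (volume (Set.Ioc θ (θ + η))).toReal := by
            apply norm_setIntegral_le_of_norm_le_const (measure_Ioc_lt_top)
              (C := |α / G| * ((x - 1) ^ (-α) * Real.exp (-(θ * x))))
            intro w hw
            rw [norm_norm, norm_mul, norm_mul]
            have h1 : ‖(x - 1) ^ (-α)‖ = (x - 1) ^ (-α) := abs_of_nonneg hpow
            have h2 : ‖Real.exp (-(w * x))‖ ≤ Real.exp (-(θ * x)) := by
              rw [Real.norm_eq_abs, Real.abs_exp]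
              apply Real.exp_le_exp.2
              nlinarith [hw.1]
            calc ‖α / G‖ * (‖(x - 1) ^ (-α)‖ * ‖Real.exp (-(w * x))‖)
                ≤ ‖α / G‖ * ((x - 1) ^ (-α) * Real.exp (-(θ * x))) := by
                  rw [h1]
                  exact mul_le_mul_of_nonneg_left
                    (mul_le_mul_of_nonneg_left h2 hpow) (norm_nonneg _)
              _ = |α / G| * ((x - 1) ^ (-α) * Real.exp (-(θ * x))) := rfl
          rwa [Real.volume_Ioc, add_sub_cancel_left, ENNReal.toReal_ofReal hη] at key
        refine Integrable.mono' (((my_shifted_integrable hα1 hθ).const_mul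
          (|α / G|)).mul_const η) ?_ hbound
        exact (hprodmeas.norm.integral_prod_right').congr
          (Filter.Eventually.of_forall (fun x => rfl))
    have hswap := MeasureTheory.integral_integral_swap
      (f := fun x w => (α / G) * ((x - 1) ^ (-α) * Real.exp (-(w * x)))) hint
    rw [hswap]
    -- Step 3: evaluate inner integral
    have step3 : ∀ w ∈ Set.Ioc θ (θ + η),
        (∫ x in Set.Ioi (1:ℝ), (α / G) * ((x - 1) ^ (-α) * Real.exp (-(w * x))))
          = α * (Real.exp (-w) * w ^ (α - 1)) := by
      intro w hw
      have hw0 : 0 < w := lt_trans hθ hw.1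
      rw [MeasureTheory.integral_const_mul, my_shift_setIntegral
        (fun x => (x - 1) ^ (-α) * Real.exp (-(w * x)))]
      have : ∀ t ∈ Set.Ioi (0:ℝ),
          (t + 1 - 1) ^ (-α) * Real.exp (-(w * (t + 1)))
            = Real.exp (-w) * (t ^ ((1 - α) - 1) * Real.exp (-(w * t))) := by
        intro t ht
        rw [add_sub_cancel_right, show -(w * (t + 1)) = -(w * t) + -w by ring, Real.exp_add,
          show (1 - α) - 1 = -α by ring]
        ring
      rw [setIntegral_congr_fun measurableSet_Ioi this, MeasureTheory.integral_const_mul,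
        Real.integral_rpow_mul_exp_neg_mul_Ioi (by linarith : (0:ℝ) < 1 - α) hw0]
      have hpow : (1 / w) ^ (1 - α) = w ^ (α - 1) := by
        rw [one_div, Real.inv_rpow hw0.le, ← Real.rpow_neg hw0.le,
          show -(1 - α) = α - 1 by ring]
      rw [hpow, hGdef]
      field_simp
    rw [setIntegral_congr_fun measurableSet_Ioc step3, MeasureTheory.integral_const_mul,
      ← intervalIntegral.integral_of_le hle]
  · -- additivity of the incomplete gamma integral
    have hi : IntegrableOn (fun w : ℝ => Real.exp (-w) * w ^ (α - 1)) (Set.Ioi 0) :=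
      Real.GammaIntegral_convergent hα0
    have h1 : IntervalIntegrable (fun w : ℝ => Real.exp (-w) * w ^ (α - 1)) volume 0 θ := by
      rw [intervalIntegrable_iff, Set.uIoc_of_le hθ.le]
      exact hi.mono_set Set.Ioc_subset_Ioi_self
    have h2 : IntervalIntegrable (fun w : ℝ => Real.exp (-w) * w ^ (α - 1)) volume θ (η + θ) := by
      rw [intervalIntegrable_iff, Set.uIoc_of_le (by linarith)]
      exact hi.mono_set (fun w hw => lt_trans hθ hw.1)
    rw [show θ + η = η + θ by ring,
      ← intervalIntegral.integral_add_adjacent_intervals h1 h2]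
    ring
end

section
/- For every α ∈ (0,1) and every θ > 0, ∫_1^∞ (α/Γ(1-α)) (z-1)^{-α} z^{-1} e^{-θz} dz = α Γ(α;θ), where Γ(α;θ) = ∫_θ^∞ e^{-w} w^{α-1} dw; in particular the Lévy measure of the tempered subordinator S_{α,θ} is finite with total mass αΓ(α;θ). -/
open Real Set MeasureTheory Filter Topology

private lemma exp_integral_Ioi_aux {z : ℝ} (θ : ℝ) (hz : 0 < z) :
    ∫ w in Ioi θ, Real.exp (-w * z) = Real.exp (-θ * z) / z := by
  have hderiv : ∀ w ∈ Ici θ,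
      HasDerivAt (fun w => -Real.exp (-w * z) / z) (Real.exp (-w * z)) w := by
    intro w _
    have h1 : HasDerivAt (fun w : ℝ => -w * z) (-z) w := by
      simpa using (hasDerivAt_id w).neg.mul_const z
    have h2 := (h1.exp).neg.div_const z
    refine h2.congr_deriv ?_
    field_simp
  have hint : IntegrableOn (fun w => Real.exp (-w * z)) (Ioi θ) := by
    have := exp_neg_integrableOn_Ioi θ hz
    apply this.congr_fun (fun w _ => by ring_nf) measurableSet_Ioi
  have htop : Tendsto (fun w : ℝ => -w * z) atTop atBot := by
    have := (tendsto_id (α := ℝ)).atTop_mul_const hz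
    simpa [neg_mul] using (tendsto_neg_atBot_iff.mpr this)
  have htend : Tendsto (fun w => -Real.exp (-w * z) / z) atTop (𝓝 0) := by
    have := ((Real.tendsto_exp_atBot.comp htop).neg).div_const z
    simpa using this
  have := integral_Ioi_of_hasDerivAt_of_tendsto' hderiv hint htend
  rw [this]
  field_simp
  ring

private lemma inner_z_eq (α : ℝ) (hα : α ∈ Set.Ioo (0:ℝ) 1) {w : ℝ} (hw : 0 < w) :
    ∫ z in Ioi (1:ℝ), (z - 1) ^ (-α) * Real.exp (-w * z)
      = Real.exp (-w) * (w ^ (α - 1) * Real.Gamma (1 - α)) := by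
  have h1α : 0 < 1 - α := by linarith [hα.2]
  have hshift := (measurePreserving_add_right (volume : Measure ℝ) 1).setIntegral_preimage_emb
      (measurableEmbedding_addRight 1)
      (fun z => (z - 1) ^ (-α) * Real.exp (-w * z)) (Ioi 1)
  have hpre : ((· + (1:ℝ)) ⁻¹' Ioi 1) = Ioi 0 := by
    ext u; simp [mem_Ioi]
  rw [← hshift, hpre]
  have hcong : ∀ u ∈ Ioi (0:ℝ), (u + 1 - 1) ^ (-α) * Real.exp (-w * (u + 1))
      = (u ^ ((1 - α) - 1) * Real.exp (-(w * u))) * Real.exp (-w) := by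
    intro u _
    have h1 : u + 1 - 1 = u := by ring
    have h2 : (1 - α) - 1 = -α := by ring
    rw [h1, h2, mul_assoc, ← Real.exp_add]
    congr 2
    ring
  rw [setIntegral_congr_fun measurableSet_Ioi hcong, integral_mul_const,
    integral_rpow_mul_exp_neg_mul_Ioi h1α hw]
  have hw1 : (1 / w : ℝ) ^ (1 - α) = w ^ (α - 1) := by
    rw [one_div, Real.inv_rpow hw.le, ← Real.rpow_neg hw.le, neg_sub]
  rw [hw1]; ring

private lemma inner_z_int (α : ℝ) (hα : α ∈ Set.Ioo (0:ℝ) 1) {w : ℝ} (hw : 0 < w) :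
    IntegrableOn (fun z => (z - 1) ^ (-α) * Real.exp (-w * z)) (Ioi (1:ℝ)) := by
  rw [← (measurePreserving_add_right (volume : Measure ℝ) 1).integrableOn_comp_preimage
      (measurableEmbedding_addRight 1) (f := fun z => (z - 1) ^ (-α) * Real.exp (-w * z))
      (s := Ioi 1)]
  have hpre : ((· + (1:ℝ)) ⁻¹' Ioi 1) = Ioi 0 := by
    ext u; simp [mem_Ioi]
  rw [hpre]
  have base := integrableOn_rpow_mul_exp_neg_mul_rpow
    (by linarith [hα.2] : (-1:ℝ) < -α) one_pos hw
  simp only [Real.rpow_one] at base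
  have hb : IntegrableOn (fun u : ℝ => (u ^ (-α) * Real.exp (-(w * u))) * Real.exp (-w))
      (Ioi 0) := by
    apply IntegrableOn.congr_fun (base.mul_const (Real.exp (-w))) _ measurableSet_Ioi
    intro u _; ring_nf
  apply IntegrableOn.congr_fun hb _ measurableSet_Ioi
  intro u _
  show (u ^ (-α) * Real.exp (-(w * u))) * Real.exp (-w)
      = (u + 1 - 1) ^ (-α) * Real.exp (-w * (u + 1))
  have h1 : u + 1 - 1 = u := by ring
  rw [h1, mul_assoc, ← Real.exp_add]
  congr 2
  ring

/-- For `α ∈ (0,1)` and `θ > 0`, the total mass of the Lévy measure of the tempered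
subordinator `S_{α,θ}` is `α Γ(α;θ)`:
`∫_1^∞ (α/Γ(1-α)) (z-1)^(-α) z⁻¹ e^(-θz) dz = α ∫_θ^∞ e^(-w) w^(α-1) dw`. -/
theorem tempered_levy_measure_total_mass (α θ : ℝ) (hα : α ∈ Set.Ioo (0:ℝ) 1)
    (hθ : 0 < θ) :
    ∫ z in Set.Ioi (1:ℝ), (α / Real.Gamma (1 - α)) * (z - 1) ^ (-α) * z⁻¹ * Real.exp (-θ * z)
      = α * ∫ w in Set.Ioi θ, Real.exp (-w) * w ^ (α - 1) := by
  obtain ⟨hα0, hα1⟩ := hα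
  have h1α : 0 < 1 - α := by linarith
  have hG : 0 < Real.Gamma (1 - α) := Real.Gamma_pos_of_pos h1α
  set G := Real.Gamma (1 - α) with hGdef
  have step1 : ∫ z in Set.Ioi (1:ℝ), (α / G) * (z - 1) ^ (-α) * z⁻¹ * Real.exp (-θ * z)
      = (α / G) * ∫ z in Set.Ioi (1:ℝ), (z - 1) ^ (-α) * (z⁻¹ * Real.exp (-θ * z)) := by
    rw [← integral_const_mul]
    exact setIntegral_congr_fun measurableSet_Ioi fun z _ => by ring
  have step2 : ∫ z in Set.Ioi (1:ℝ), (z - 1) ^ (-α) * (z⁻¹ * Real.exp (-θ * z))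
      = ∫ z in Set.Ioi (1:ℝ), ∫ w in Set.Ioi θ, (z - 1) ^ (-α) * Real.exp (-w * z) := by
    refine (setIntegral_congr_fun measurableSet_Ioi fun z hz => ?_).symm
    have hz0 : (0:ℝ) < z := lt_trans one_pos hz
    rw [integral_const_mul, exp_integral_Ioi_aux θ hz0]
    ring
  have hFmeas : AEStronglyMeasurable (fun p : ℝ × ℝ => (p.1 - 1) ^ (-α) * Real.exp (-p.2 * p.1))
      ((volume.restrict (Set.Ioi (1:ℝ))).prod (volume.restrict (Set.Ioi θ))) := by
    apply Measurable.aestronglyMeasurable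
    exact ((measurable_fst.sub measurable_const).pow measurable_const).mul
      ((measurable_snd.neg.mul measurable_fst).exp)
  have hsect : ∀ᵐ w ∂(volume.restrict (Set.Ioi θ)),
      Integrable (fun z => (z - 1) ^ (-α) * Real.exp (-w * z))
        (volume.restrict (Set.Ioi (1:ℝ))) := by
    filter_upwards [self_mem_ae_restrict measurableSet_Ioi] with w hw
    exact inner_z_int α ⟨hα0, hα1⟩ (lt_trans hθ hw)
  have hGint : IntegrableOn (fun w => Real.exp (-w) * (w ^ (α - 1) * G)) (Set.Ioi θ) := by
    have hexp : IntegrableOn (fun w : ℝ => Real.exp (-1 * w)) (Set.Ioi θ) :=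
      exp_neg_integrableOn_Ioi θ one_pos
    refine Integrable.mono' (hexp.const_mul (θ ^ (α - 1) * G)) ?_ ?_
    · apply Measurable.aestronglyMeasurable
      exact (measurable_id.neg.exp).mul ((measurable_id.pow measurable_const).mul measurable_const)
    · filter_upwards [self_mem_ae_restrict measurableSet_Ioi] with w hw
      have hw0 : 0 < w := lt_trans hθ hw
      have h1 : w ^ (α - 1) ≤ θ ^ (α - 1) :=
        Real.rpow_le_rpow_of_nonpos hθ hw.le (by linarith)
      have h2 : (0:ℝ) ≤ w ^ (α - 1) := Real.rpow_nonneg hw0.le _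
      rw [Real.norm_eq_abs, abs_of_nonneg (by positivity)]
      have : Real.exp (-1 * w) = Real.exp (-w) := by norm_num
      rw [this]
      nlinarith [mul_le_mul_of_nonneg_right (mul_le_mul_of_nonneg_right h1 hG.le)
        (Real.exp_pos (-w)).le]
  have hnormint : Integrable (fun w => ∫ z, ‖(z - 1) ^ (-α) * Real.exp (-w * z)‖
      ∂(volume.restrict (Set.Ioi (1:ℝ)))) (volume.restrict (Set.Ioi θ)) := by
    apply hGint.congr
    filter_upwards [self_mem_ae_restrict measurableSet_Ioi] with w hw
    have hw0 : 0 < w := lt_trans hθ hw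
    have hnorm : ∫ z in Set.Ioi (1:ℝ), ‖(z - 1) ^ (-α) * Real.exp (-w * z)‖
        = ∫ z in Set.Ioi (1:ℝ), (z - 1) ^ (-α) * Real.exp (-w * z) := by
      refine setIntegral_congr_fun measurableSet_Ioi fun z hz => ?_
      rw [Real.norm_eq_abs, abs_of_nonneg]
      exact mul_nonneg (Real.rpow_nonneg (by linarith [mem_Ioi.mp hz]) _) (Real.exp_pos _).le
    rw [hnorm, inner_z_eq α ⟨hα0, hα1⟩ hw0]
  have hFint : Integrable (fun p : ℝ × ℝ => (p.1 - 1) ^ (-α) * Real.exp (-p.2 * p.1))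
      ((volume.restrict (Set.Ioi (1:ℝ))).prod (volume.restrict (Set.Ioi θ))) :=
    (integrable_prod_iff' hFmeas).2 ⟨hsect, hnormint⟩
  have hswap := MeasureTheory.integral_integral_swap
    (f := fun z w => (z - 1) ^ (-α) * Real.exp (-w * z)) hFint
  have step3 : ∫ w in Set.Ioi θ, ∫ z in Set.Ioi (1:ℝ), (z - 1) ^ (-α) * Real.exp (-w * z)
      = G * ∫ w in Set.Ioi θ, Real.exp (-w) * w ^ (α - 1) := by
    rw [← integral_const_mul]
    refine setIntegral_congr_fun measurableSet_Ioi fun w hw => ?_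
    rw [inner_z_eq α ⟨hα0, hα1⟩ (lt_trans hθ hw)]
    ring
  rw [step1, step2, hswap, step3]
  field_simp
end

section
/- For every α ∈ (0,1) and every x ∈ ℝ, ∫_1^∞ (e^{-x²/(2z)} / √(2πz)) · (α/Γ(1-α)) (z-1)^{-α} z^{-1} dz = (α Γ(α+1/2) / √(2π)) · Σ_{k=0}^∞ ((α+1/2)_k / (k! Γ(k + 3/2))) (-x²/2)^k, where (a)_k = a(a+1)⋯(a+k-1) is the Pochhammer symbol; i.e., the Lévy density of the Brownian motion subordinated by S_α equals (αΓ(α+1/2)/√(2π)) E_{1,3/2}^{α+1/2}(-x²/2), a generalized (three-parameter) Mittag-Leffler function. -/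
open Real Set MeasureTheory

lemma cplx_eq_real_beta (a b : ℝ) (ha : 0 < a) (hb : 0 < b) :
    Complex.betaIntegral a b = ((∫ t in (0:ℝ)..1, t ^ (a-1) * (1-t) ^ (b-1) : ℝ) : ℂ) := by
  rw [Complex.betaIntegral, ← intervalIntegral.integral_ofReal]
  refine intervalIntegral.integral_congr fun t ht => ?_
  rw [uIcc_of_le zero_le_one] at ht
  rw [Complex.ofReal_mul, Complex.ofReal_cpow ht.1 (a-1), Complex.ofReal_cpow (by linarith [ht.2] : (0:ℝ) ≤ 1 - t) (b-1)]
  push_cast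
  ring

lemma real_beta_integral (a b : ℝ) (ha : 0 < a) (hb : 0 < b) :
    ∫ t in Ioo (0:ℝ) 1, t ^ (a-1) * (1-t) ^ (b-1)
      = Real.Gamma a * Real.Gamma b / Real.Gamma (a+b) := by
  have h := Complex.Gamma_mul_Gamma_eq_betaIntegral
    (by simpa using ha : 0 < (a:ℂ).re) (by simpa using hb : 0 < (b:ℂ).re)
  rw [cplx_eq_real_beta a b ha hb, ← Complex.ofReal_add, Complex.Gamma_ofReal,
    Complex.Gamma_ofReal, Complex.Gamma_ofReal, ← Complex.ofReal_mul, ← Complex.ofReal_mul] at h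
  have h2 := Complex.ofReal_injective h
  rw [intervalIntegral.integral_of_le zero_le_one,
    MeasureTheory.integral_Ioc_eq_integral_Ioo] at h2
  have hG : Real.Gamma (a+b) ≠ 0 := (Real.Gamma_pos_of_pos (by linarith)).ne'
  field_simp [h2]
  rw [h2]; ring

lemma real_beta_integrable (a b : ℝ) (ha : 0 < a) (hb : 0 < b) :
    IntegrableOn (fun t => t ^ (a-1) * (1-t) ^ (b-1)) (Ioo (0:ℝ) 1) := by
  have h := (Complex.betaIntegral_convergent (u := a) (v := b)
    (by simpa using ha) (by simpa using hb)).norm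
  rw [intervalIntegrable_iff_integrableOn_Ioo_of_le zero_le_one] at h
  refine h.congr_fun (fun t ht => ?_) measurableSet_Ioo
  have h1 : (0:ℝ) < t := ht.1
  have h2 : (0:ℝ) < 1 - t := by linarith [ht.2]
  beta_reduce
  rw [norm_mul]
  rw [show ((a:ℂ) - 1) = ((a - 1 : ℝ) : ℂ) by push_cast; ring,
      show ((b:ℂ) - 1) = ((b - 1 : ℝ) : ℂ) by push_cast; ring]
  rw [show ((1:ℂ) - (t:ℂ)) = ((1 - t : ℝ) : ℂ) by push_cast; ring]
  rw [Complex.norm_cpow_eq_rpow_re_of_pos h1, Complex.norm_cpow_eq_rpow_re_of_pos h2]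
  simp

lemma inv_Ioo_image : (fun t : ℝ => t⁻¹) '' Ioo 0 1 = Ioi (1:ℝ) := by
  ext z
  constructor
  · rintro ⟨t, ⟨h0, h1⟩, rfl⟩
    exact (one_lt_inv₀ h0).mpr h1
  · intro hz
    have hz1 : (1:ℝ) < z := hz
    exact ⟨z⁻¹, ⟨inv_pos.mpr (by linarith), inv_lt_one_of_one_lt₀ hz1⟩, inv_inv z⟩

lemma inv_deriv_Ioo : ∀ t ∈ Ioo (0:ℝ) 1,
    HasDerivWithinAt (fun t : ℝ => t⁻¹) (-(t^2)⁻¹) (Ioo (0:ℝ) 1) t :=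
  fun t ht => (hasDerivAt_inv ht.1.ne').hasDerivWithinAt

lemma subst_integral (g : ℝ → ℝ) :
    ∫ z in Ioi (1:ℝ), g z = ∫ t in Ioo (0:ℝ) 1, (t^2)⁻¹ * g t⁻¹ := by
  rw [← inv_Ioo_image,
    integral_image_eq_integral_abs_deriv_smul measurableSet_Ioo inv_deriv_Ioo
      (Set.injOn_of_injective inv_injective) g]
  refine setIntegral_congr_fun measurableSet_Ioo fun t ht => ?_
  rw [abs_neg, abs_inv, abs_of_nonneg (sq_nonneg t), smul_eq_mul]

lemma subst_integrable (g : ℝ → ℝ) :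
    IntegrableOn g (Ioi (1:ℝ)) ↔
      IntegrableOn (fun t => (t^2)⁻¹ * g t⁻¹) (Ioo (0:ℝ) 1) := by
  rw [← inv_Ioo_image,
    integrableOn_image_iff_integrableOn_abs_deriv_smul measurableSet_Ioo inv_deriv_Ioo
      (Set.injOn_of_injective inv_injective) g]
  constructor <;> intro h <;> refine h.congr_fun (fun t ht => ?_) measurableSet_Ioo <;>
    (beta_reduce; rw [abs_neg, abs_inv, abs_of_nonneg (sq_nonneg t), smul_eq_mul])

lemma integrand_transform {α : ℝ} (c : ℝ) {t : ℝ} (ht : t ∈ Ioo (0:ℝ) 1) :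
    (t^2)⁻¹ * ((t⁻¹ - 1) ^ (-α) * (t⁻¹) ^ (-c)) = t ^ ((c+α-1)-1) * (1-t) ^ ((1-α)-1) := by
  obtain ⟨h0, h1⟩ := ht
  have h1t : (0:ℝ) < 1 - t := by linarith
  have e1 : t⁻¹ - 1 = (1-t) * t⁻¹ := by field_simp
  rw [e1, Real.mul_rpow h1t.le (inv_nonneg.mpr h0.le), Real.inv_rpow h0.le, Real.inv_rpow h0.le,
    ← Real.rpow_neg h0.le, ← Real.rpow_neg h0.le, neg_neg, neg_neg]
  rw [show (t^2)⁻¹ = t ^ (-2 : ℝ) by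
    rw [← Real.rpow_natCast t 2, ← Real.rpow_neg h0.le]; norm_num]
  rw [show ((1:ℝ)-α)-1 = -α by ring,
    show c+α-1-1 = -2 + (α + c) by ring, Real.rpow_add h0, Real.rpow_add h0]
  ring


lemma J_eq (α : ℝ) (hα0 : 0 < α) (hα1 : α < 1) (c : ℝ) (hc : 1 ≤ c) :
    ∫ z in Ioi (1:ℝ), (z-1) ^ (-α) * z ^ (-c)
      = Real.Gamma (c+α-1) * Real.Gamma (1-α) / Real.Gamma c := by
  rw [subst_integral (fun z => (z-1) ^ (-α) * z ^ (-c))]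
  rw [setIntegral_congr_fun measurableSet_Ioo
    (fun t ht => integrand_transform (α := α) c ht)]
  rw [real_beta_integral (c+α-1) (1-α) (by linarith) (by linarith)]
  rw [show (c+α-1)+(1-α) = c by ring]

lemma J_integrable (α : ℝ) (hα0 : 0 < α) (hα1 : α < 1) (c : ℝ) (hc : 1 ≤ c) :
    IntegrableOn (fun z => (z-1) ^ (-α) * z ^ (-c)) (Ioi (1:ℝ)) := by
  rw [subst_integrable]
  exact ((real_beta_integrable (c+α-1) (1-α) (by linarith) (by linarith)).congr_fun
    (fun t ht => (integrand_transform (α := α) c ht).symm) measurableSet_Ioo)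

lemma Gamma_prod (s : ℝ) (hs : 0 < s) (k : ℕ) :
    Real.Gamma (s + k) = Real.Gamma s * ∏ i ∈ Finset.range k, (s + i) := by
  induction k with
  | zero => simp
  | succ n ih =>
    have hne : s + (n:ℝ) ≠ 0 := by positivity
    rw [Finset.prod_range_succ, ← mul_assoc, ← ih,
      show s + ((n:ℕ)+1:ℕ) = (s + (n:ℝ)) + 1 by push_cast; ring, Real.Gamma_add_one hne]
    ring

lemma Gamma_ratio_le (α : ℝ) (hα0 : 0 < α) (hα1 : α < 1) (k : ℕ) :
    Real.Gamma ((k:ℝ) + 3/2 + α - 1)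
      ≤ max (Real.Gamma (α + 1/2) / Real.Gamma (3/2)) 1 * Real.Gamma ((k:ℝ) + 3/2) := by
  set M := max (Real.Gamma (α + 1/2) / Real.Gamma (3/2)) 1 with hM
  match k with
  | 0 =>
    have hG : 0 < Real.Gamma (3/2 : ℝ) := Real.Gamma_pos_of_pos (by norm_num)
    have h1 : Real.Gamma (α + 1/2) / Real.Gamma (3/2) ≤ M := le_max_left _ _
    have := mul_le_mul_of_nonneg_right h1 hG.le
    rw [div_mul_cancel₀ _ hG.ne'] at this
    calc Real.Gamma ((0:ℕ) + 3/2 + α - 1) = Real.Gamma (α + 1/2) := by norm_num; ring_nf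
    _ ≤ M * Real.Gamma (3/2) := this
    _ = M * Real.Gamma ((0:ℕ) + 3/2) := by norm_num
  | (n+1) =>
    set t : ℝ := ((n+1 : ℕ) : ℝ) with ht
    have ht1 : (1:ℝ) ≤ t := by rw [ht]; exact_mod_cast Nat.one_le_iff_ne_zero.mpr (Nat.succ_ne_zero n)
    have hu : (t + 1/2) ∈ Ioi (0:ℝ) := by simp only [mem_Ioi]; linarith
    have hv : (t + 3/2) ∈ Ioi (0:ℝ) := by simp only [mem_Ioi]; linarith
    have hconv := Real.convexOn_Gamma.2 hu hv (by linarith : (0:ℝ) ≤ 1 - α)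
      (le_of_lt hα0) (by ring)
    have harg : (1-α) • (t + 1/2) + α • (t + 3/2) = t + 3/2 + α - 1 := by
      simp only [smul_eq_mul]; ring
    rw [harg, smul_eq_mul, smul_eq_mul] at hconv
    have hGu : 0 < Real.Gamma (t + 1/2) := Real.Gamma_pos_of_pos (by linarith)
    have hstep : Real.Gamma (t + 3/2) = (t + 1/2) * Real.Gamma (t + 1/2) := by
      rw [show t + 3/2 = (t + 1/2) + 1 by ring, Real.Gamma_add_one (by linarith)]
    have hle : Real.Gamma (t + 1/2) ≤ Real.Gamma (t + 3/2) := by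
      rw [hstep]; nlinarith
    have hM1 : (1:ℝ) ≤ M := le_max_right _ _
    have hGv : 0 < Real.Gamma (t + 3/2) := Real.Gamma_pos_of_pos (by linarith)
    calc Real.Gamma (t + 3/2 + α - 1) ≤ (1-α) * Real.Gamma (t+1/2) + α * Real.Gamma (t+3/2) := hconv
    _ ≤ Real.Gamma (t + 3/2) := by nlinarith
    _ ≤ M * Real.Gamma (t + 3/2) := by nlinarith

lemma exp_tsum (y : ℝ) : Real.exp y = ∑' k : ℕ, y^k / (k.factorial : ℝ) := by
  rw [Real.exp_eq_exp_ℝ, NormedSpace.exp_eq_tsum_div]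

lemma pointwise_expand (α x : ℝ) {z : ℝ} (hz : z ∈ Ioi (1:ℝ)) :
    (Real.exp (-x ^ 2 / (2 * z)) / Real.sqrt (2 * π * z))
        * ((α / Real.Gamma (1 - α)) * (z - 1) ^ (-α) * z⁻¹)
      = ∑' k : ℕ, (α / (Real.Gamma (1-α) * Real.sqrt (2*π)) * ((-x^2/2)^k / (k.factorial : ℝ)))
          * ((z-1) ^ (-α) * z ^ (-((k:ℝ)+3/2))) := by
  have hz1 : (1:ℝ) < z := hz
  have hz0 : (0:ℝ) < z := by linarith
  have hsz : 0 < Real.sqrt z := Real.sqrt_pos.mpr hz0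
  have key : ∀ k : ℕ, (z⁻¹)^k * (z⁻¹ * (Real.sqrt z)⁻¹) = z ^ (-((k:ℝ)+3/2)) := by
    intro k
    rw [Real.sqrt_eq_rpow, ← Real.rpow_neg hz0.le, ← Real.rpow_neg_one z,
      ← Real.rpow_natCast (z ^ (-1:ℝ)) k, ← Real.rpow_mul hz0.le,
      ← Real.rpow_add hz0, ← Real.rpow_add hz0]
    congr 1
    push_cast
    ring
  set D : ℝ := (Real.sqrt (2*π) * Real.sqrt z)⁻¹ * ((α / Real.Gamma (1 - α)) * (z - 1) ^ (-α) * z⁻¹)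
    with hD
  have hper : ∀ k : ℕ,
      (α / (Real.Gamma (1-α) * Real.sqrt (2*π)) * ((-x^2/2)^k / (k.factorial : ℝ)))
          * ((z-1) ^ (-α) * z ^ (-((k:ℝ)+3/2)))
        = ((-x^2/(2*z))^k / (k.factorial : ℝ)) * D := by
    intro k
    have h2 : (-x^2/(2*z))^k = (-x^2/2)^k * (z⁻¹)^k := by
      rw [← mul_pow]; congr 1; field_simp
    rw [h2, ← key k, hD]
    have hfac : ((k.factorial : ℝ)) ≠ 0 := Nat.cast_ne_zero.mpr k.factorial_ne_zero
    field_simp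
  rw [tsum_congr hper, tsum_mul_right, ← exp_tsum]
  rw [show 2 * π * z = (2 * π) * z by ring, Real.sqrt_mul (by positivity) z, hD]
  field_simp






/-- For `α ∈ (0,1)` and `x ∈ ℝ`, the Lévy density of the Brownian motion subordinated
by `S_α` (a Gaussian mixture against the Lévy density of `S_α`) equals
`(α Γ(α+1/2)/√(2π)) E_{1,3/2}^{α+1/2}(-x²/2)`, where the generalized (three-parameter)
Mittag-Leffler function is written out as the series
`Σ_k (α+1/2)_k (-x²/2)^k / (k! Γ(k+3/2))`, with `(a)_k = Π_{i<k} (a+i)` the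
Pochhammer symbol. -/
theorem subordinated_brownian_levy_density (α : ℝ) (hα : α ∈ Set.Ioo (0:ℝ) 1) (x : ℝ) :
    ∫ z in Set.Ioi (1:ℝ),
        (Real.exp (-x ^ 2 / (2 * z)) / Real.sqrt (2 * π * z))
          * ((α / Real.Gamma (1 - α)) * (z - 1) ^ (-α) * z⁻¹)
      = (α * Real.Gamma (α + 1 / 2) / Real.sqrt (2 * π)) *
          ∑' k : ℕ,
            ((∏ i ∈ Finset.range k, (α + 1 / 2 + (i : ℝ)))
              / ((k.factorial : ℝ) * Real.Gamma ((k : ℝ) + 3 / 2)))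
              * (-x ^ 2 / 2) ^ k := by
  obtain ⟨hα0, hα1⟩ := hα
  have hΓα : 0 < Real.Gamma (1 - α) := Real.Gamma_pos_of_pos (by linarith)
  have hsπ : 0 < Real.sqrt (2 * π) := Real.sqrt_pos.mpr (by positivity)
  set C0 : ℝ := α / (Real.Gamma (1-α) * Real.sqrt (2*π)) with hC0
  have hC0pos : 0 < C0 := by rw [hC0]; positivity
  set c : ℕ → ℝ := fun k => C0 * ((-x^2/2)^k / (k.factorial : ℝ)) with hc
  set f : ℕ → ℝ → ℝ := fun k z => c k * ((z-1) ^ (-α) * z ^ (-((k:ℝ)+3/2))) with hf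
  have hck : ∀ k : ℕ, 1 ≤ (k:ℝ) + 3/2 := fun k => by
    have : (0:ℝ) ≤ (k:ℝ) := Nat.cast_nonneg k
    linarith
  have hintk : ∀ k, IntegrableOn (f k) (Ioi (1:ℝ)) := fun k =>
    (J_integrable α hα0 hα1 ((k:ℝ)+3/2) (hck k)).const_mul (c k)
  have hmeas : ∀ k, AEStronglyMeasurable (f k) (volume.restrict (Ioi (1:ℝ))) := fun k =>
    (hintk k).aestronglyMeasurable
  -- value of each integral
  have hval : ∀ k, ∫ z in Ioi (1:ℝ), f k z
      = c k * (Real.Gamma ((k:ℝ)+3/2+α-1) * Real.Gamma (1-α) / Real.Gamma ((k:ℝ)+3/2)) := by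
    intro k
    rw [hf]
    rw [MeasureTheory.integral_const_mul, J_eq α hα0 hα1 ((k:ℝ)+3/2) (hck k)]
  -- norm integrals
  have hnormval : ∀ k, ∫ z in Ioi (1:ℝ), ‖f k z‖
      = |c k| * (Real.Gamma ((k:ℝ)+3/2+α-1) * Real.Gamma (1-α) / Real.Gamma ((k:ℝ)+3/2)) := by
    intro k
    have : ∀ z ∈ Ioi (1:ℝ), ‖f k z‖ = |c k| * ((z-1) ^ (-α) * z ^ (-((k:ℝ)+3/2))) := by
      intro z hz
      have hz1 : (1:ℝ) < z := hz
      rw [hf, Real.norm_eq_abs, abs_mul, abs_of_nonneg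
        (mul_nonneg (Real.rpow_nonneg (by linarith) _) (Real.rpow_nonneg (by linarith) _))]
    rw [setIntegral_congr_fun measurableSet_Ioi this, MeasureTheory.integral_const_mul,
      J_eq α hα0 hα1 ((k:ℝ)+3/2) (hck k)]
  -- summability of norm integrals
  set B : ℕ → ℝ := fun k =>
    |c k| * (Real.Gamma ((k:ℝ)+3/2+α-1) * Real.Gamma (1-α) / Real.Gamma ((k:ℝ)+3/2)) with hB
  have hBnonneg : ∀ k, 0 ≤ B k := by
    intro k
    have h1 : 0 < Real.Gamma ((k:ℝ)+3/2+α-1) := Real.Gamma_pos_of_pos (by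
      have : (0:ℝ) ≤ (k:ℝ) := Nat.cast_nonneg k; linarith)
    have h2 : 0 < Real.Gamma ((k:ℝ)+3/2) := Real.Gamma_pos_of_pos (by
      have : (0:ℝ) ≤ (k:ℝ) := Nat.cast_nonneg k; linarith)
    rw [hB]
    positivity
  have hacb : ∀ k : ℕ, |c k| = C0 * ((x^2/2)^k / (k.factorial : ℝ)) := by
    intro k
    rw [hc]
    rw [abs_mul, abs_of_pos hC0pos, abs_div, abs_pow, Nat.abs_cast,
      show |(-x^2/2)| = x^2/2 by rw [abs_div]; simp [abs_of_nonneg (sq_nonneg x)]]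
  set M : ℝ := max (Real.Gamma (α + 1/2) / Real.Gamma (3/2)) 1 with hMdef
  have hBsummable : Summable B := by
    have hs : Summable (fun k : ℕ => (C0 * Real.Gamma (1-α) * M) * ((x^2/2)^k / (k.factorial : ℝ))) :=
      (Real.summable_pow_div_factorial (x^2/2)).mul_left _
    refine Summable.of_nonneg_of_le hBnonneg (fun k => ?_) hs
    have h2 : 0 < Real.Gamma ((k:ℝ)+3/2) := Real.Gamma_pos_of_pos (by
      have : (0:ℝ) ≤ (k:ℝ) := Nat.cast_nonneg k; linarith)
    have hrat := Gamma_ratio_le α hα0 hα1 k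
    have hdiv : Real.Gamma ((k:ℝ)+3/2+α-1) / Real.Gamma ((k:ℝ)+3/2) ≤ M :=
      (div_le_iff₀ h2).mpr hrat
    have hpk : (0:ℝ) ≤ (x^2/2)^k / (k.factorial : ℝ) := by positivity
    simp only [hB, hacb k]
    calc C0 * ((x^2/2)^k / (k.factorial : ℝ))
          * (Real.Gamma ((k:ℝ)+3/2+α-1) * Real.Gamma (1-α) / Real.Gamma ((k:ℝ)+3/2))
        = (C0 * Real.Gamma (1-α) * ((x^2/2)^k / (k.factorial : ℝ)))
            * (Real.Gamma ((k:ℝ)+3/2+α-1) / Real.Gamma ((k:ℝ)+3/2)) := by ring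
      _ ≤ (C0 * Real.Gamma (1-α) * ((x^2/2)^k / (k.factorial : ℝ))) * M := by
          refine mul_le_mul_of_nonneg_left hdiv (by positivity)
      _ = (C0 * Real.Gamma (1-α) * M) * ((x^2/2)^k / (k.factorial : ℝ)) := by ring
  -- lintegral condition
  have hlint : ∑' k, ∫⁻ z, ‖f k z‖ₑ ∂(volume.restrict (Ioi (1:ℝ))) ≠ ⊤ := by
    have heq : ∀ k, ∫⁻ z, ‖f k z‖ₑ ∂(volume.restrict (Ioi (1:ℝ))) = ENNReal.ofReal (B k) := by
      intro k
      rw [← ofReal_integral_norm_eq_lintegral_enorm (hintk k), hnormval k, hB]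
    rw [tsum_congr heq, ← ENNReal.ofReal_tsum_of_nonneg hBnonneg hBsummable]
    exact ENNReal.ofReal_ne_top
  -- swap
  have hswap := MeasureTheory.integral_tsum hmeas hlint
  have hcongr : ∫ z in Ioi (1:ℝ),
        (Real.exp (-x ^ 2 / (2 * z)) / Real.sqrt (2 * π * z))
          * ((α / Real.Gamma (1 - α)) * (z - 1) ^ (-α) * z⁻¹)
      = ∫ z in Ioi (1:ℝ), ∑' k, f k z :=
    setIntegral_congr_fun measurableSet_Ioi (fun z hz => pointwise_expand α x hz)
  rw [hcongr, hswap, tsum_congr hval]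
  -- final algebra
  rw [← tsum_mul_left]
  refine tsum_congr fun k => ?_
  have hΓ32 : 0 < Real.Gamma ((k:ℝ)+3/2) := Real.Gamma_pos_of_pos (by
    have : (0:ℝ) ≤ (k:ℝ) := Nat.cast_nonneg k; linarith)
  have hfacpos : (0:ℝ) < (k.factorial : ℝ) := Nat.cast_pos.mpr k.factorial_pos
  have hGP : Real.Gamma ((k:ℝ)+3/2+α-1)
      = Real.Gamma (α+1/2) * ∏ i ∈ Finset.range k, (α + 1/2 + (i:ℝ)) := by
    rw [show (k:ℝ)+3/2+α-1 = (α+1/2) + (k:ℕ) by push_cast; ring]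
    exact Gamma_prod (α+1/2) (by linarith) k
  simp only [hc, hGP, hC0]
  rw [div_eq_mul_inv α, div_eq_mul_inv (α * Real.Gamma (α+1/2))]
  rw [mul_inv (Real.Gamma (1-α)) (Real.sqrt (2*π))]
  field_simp
end
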